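/- arXiv:2406.12343 — 3 statements merged into one kernel-verified Lean document; each statement's English description precedes it below -/
import Mathlib

section
/- There exists a constant C, depending only on M₁ and M₂ (and in particular independent of n, j, a, s, and x), such that for every n ≥ 1, every subinterval [t_{j−1}, t_j] of the uniform partition, all a, s ∈ [t_{j−1}, t_j] with a ≠ s, and every x ∈ C[0,1], the confluent second-order divided difference [a,s,s]Kx = ((Kx)'(s) − (Kx(s) − Kx(a))/(s − a))/(s − a) satisfies |[a,s,s]Kx| ≤ C‖x‖∞. -/
open Set MeasureTheory


private lemma stmt3_taylor2 {f f' f'' : ℝ → ℝ} {b s M₂ : ℝ}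
    (hf : ∀ u ∈ uIcc b s, HasDerivWithinAt f (f' u) (uIcc b s) u)
    (hf' : ∀ u ∈ uIcc b s, HasDerivWithinAt f' (f'' u) (uIcc b s) u)
    (hb : ∀ u ∈ uIcc b s, |f'' u| ≤ M₂) :
    |f b - f s - (b - s) * f' s| ≤ M₂ * (b - s)^2 := by
  have hbU : b ∈ uIcc b s := left_mem_uIcc
  have hsU : s ∈ uIcc b s := right_mem_uIcc
  have hconv : Convex ℝ (uIcc b s) := convex_uIcc b s
  have hM₂0 : 0 ≤ M₂ := (abs_nonneg _).trans (hb b hbU)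
  have h1 : ∀ u ∈ uIcc b s, ‖f' u - f' s‖ ≤ M₂ * |b - s| := by
    intro u hu
    have h := Convex.norm_image_sub_le_of_norm_hasDerivWithin_le hf'
      (fun v hv => by simpa using hb v hv) hconv hsU hu
    refine h.trans ?_
    have h2 : |u - s| ≤ |b - s| := by
      have h3 : min b s ≤ u := hu.1
      have h4 : u ≤ max b s := hu.2
      have h5 : min b s ≤ s := min_le_right b s
      have h6 : s ≤ max b s := le_max_right b s
      have h7 : max b s - min b s = |b - s| := by rw [max_sub_min_eq_abs, abs_sub_comm]
      rw [abs_sub_le_iff]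
      constructor <;> linarith
    simp only [Real.norm_eq_abs]
    exact mul_le_mul_of_nonneg_left h2 hM₂0
  have key : ∀ u ∈ uIcc b s, HasDerivWithinAt (fun v => f v - v * f' s) (f' u - f' s) (uIcc b s) u := by
    intro u hu
    have := (hf u hu).sub ((hasDerivWithinAt_id u (uIcc b s)).mul_const (f' s))
    simpa only [id_eq, one_mul, Pi.sub_def] using this
  have h5 := Convex.norm_image_sub_le_of_norm_hasDerivWithin_le key h1 hconv hsU hbU
  calc |f b - f s - (b - s) * f' s|
      = ‖(f b - b * f' s) - (f s - s * f' s)‖ := by rw [Real.norm_eq_abs]; congr 1; ring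
    _ ≤ M₂ * |b - s| * ‖b - s‖ := h5
    _ = M₂ * (b - s)^2 := by
        rw [Real.norm_eq_abs, mul_assoc, abs_mul_abs_self, sq]

private lemma stmt3_II {f g : ℝ → ℝ} {c : ℝ} (h0 : 0 ≤ c) (h1 : c ≤ 1)
    (hf : ContinuousOn f (Icc 0 c)) (hg : ContinuousOn g (Icc c 1)) :
    IntervalIntegrable (fun t => if t ≤ c then f t else g t) volume 0 1 := by
  have hA : IntervalIntegrable (fun t => if t ≤ c then f t else g t) volume 0 c := by
    rw [intervalIntegrable_iff_integrableOn_Icc_of_le h0]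
    exact (hf.integrableOn_Icc).congr_fun (fun t ht => (if_pos ht.2).symm) measurableSet_Icc
  have hB : IntervalIntegrable (fun t => if t ≤ c then f t else g t) volume c 1 := by
    rw [intervalIntegrable_iff_integrableOn_Ioc_of_le h1]
    exact ((hg.integrableOn_Icc).mono_set Ioc_subset_Icc_self).congr_fun
      (fun t ht => (if_neg (not_le.mpr ht.1)).symm) measurableSet_Ioc
  exact hA.trans hB


/-- The Fredholm integral operator with a Green's-function-type kernel. -/
noncomputable def Kop (κ₁ κ₂ : ℝ → ℝ → ℝ) (x : ℝ → ℝ) (s : ℝ) : ℝ :=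
  ∫ t in (0:ℝ)..1, (if t ≤ s then κ₁ s t else κ₂ s t) * x t

/-- The supremum norm on `[0,1]`. -/
noncomputable def supNorm (x : ℝ → ℝ) : ℝ := ⨆ t : Set.Icc (0:ℝ) 1, |x t.1|

set_option maxHeartbeats 2000000

/-- there is a constant `C` depending only on `M₁, M₂` such that for every `n ≥ 1`,
every subinterval `[t_{j−1}, t_j]` of the uniform partition, all `a ≠ s` in it, and every
`x ∈ C[0,1]`, the confluent divided difference
`[a,s,s]Kx = ((Kx)'(s) − (Kx(s) − Kx(a))/(s − a))/(s − a)` satisfies `|[a,s,s]Kx| ≤ C‖x‖∞`. -/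
theorem stmt3 (M₁ M₂ : ℝ) :
    ∃ C : ℝ, ∀ κ₁ κ₂ D1κ₁ D1κ₂ D2κ₁ D2κ₂ : ℝ → ℝ → ℝ,
    -- κ₁, κ₂ are twice continuously differentiable on Ω₁, Ω₂ respectively
    ContDiffOn ℝ 2 (Function.uncurry κ₁) {p : ℝ × ℝ | 0 ≤ p.2 ∧ p.2 ≤ p.1 ∧ p.1 ≤ 1} →
    ContDiffOn ℝ 2 (Function.uncurry κ₂) {p : ℝ × ℝ | 0 ≤ p.1 ∧ p.1 ≤ p.2 ∧ p.2 ≤ 1} →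
    -- they agree on the diagonal
    (∀ s ∈ Icc (0:ℝ) 1, κ₁ s s = κ₂ s s) →
    -- D1κᵢ is the partial derivative ∂κᵢ/∂s on Ωᵢ and D2κᵢ is ∂²κᵢ/∂s² on Ωᵢ
    (∀ t ∈ Icc (0:ℝ) 1, ∀ s ∈ Icc t 1,
      HasDerivWithinAt (fun u => κ₁ u t) (D1κ₁ s t) (Icc t 1) s) →
    (∀ t ∈ Icc (0:ℝ) 1, ∀ s ∈ Icc (0:ℝ) t,
      HasDerivWithinAt (fun u => κ₂ u t) (D1κ₂ s t) (Icc (0:ℝ) t) s) →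
    (∀ t ∈ Icc (0:ℝ) 1, ∀ s ∈ Icc t 1,
      HasDerivWithinAt (fun u => D1κ₁ u t) (D2κ₁ s t) (Icc t 1) s) →
    (∀ t ∈ Icc (0:ℝ) 1, ∀ s ∈ Icc (0:ℝ) t,
      HasDerivWithinAt (fun u => D1κ₂ u t) (D2κ₂ s t) (Icc (0:ℝ) t) s) →
    -- |∂κᵢ/∂s| ≤ M₁ and |∂²κᵢ/∂s²| ≤ M₂ on Ωᵢ
    (∀ t ∈ Icc (0:ℝ) 1, ∀ s ∈ Icc t 1, |D1κ₁ s t| ≤ M₁) →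
    (∀ t ∈ Icc (0:ℝ) 1, ∀ s ∈ Icc (0:ℝ) t, |D1κ₂ s t| ≤ M₁) →
    (∀ t ∈ Icc (0:ℝ) 1, ∀ s ∈ Icc t 1, |D2κ₁ s t| ≤ M₂) →
    (∀ t ∈ Icc (0:ℝ) 1, ∀ s ∈ Icc (0:ℝ) t, |D2κ₂ s t| ≤ M₂) →
    -- for every n ≥ 1, every subinterval of the uniform partition, all a ≠ s in it,
    -- every x ∈ C[0,1], and (Kx)' the derivative of Kx on [0,1]:
    ∀ n : ℕ, 1 ≤ n → ∀ j : ℕ, 1 ≤ j → j ≤ n →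
    ∀ a ∈ Icc (((j:ℝ) - 1) / n) ((j:ℝ) / n), ∀ s ∈ Icc (((j:ℝ) - 1) / n) ((j:ℝ) / n), a ≠ s →
    ∀ x : ℝ → ℝ, ContinuousOn x (Icc (0:ℝ) 1) →
    ∀ Kx' : ℝ → ℝ,
      (∀ u ∈ Icc (0:ℝ) 1, HasDerivWithinAt (Kop κ₁ κ₂ x) (Kx' u) (Icc (0:ℝ) 1) u) →
      |(Kx' s - (Kop κ₁ κ₂ x s - Kop κ₁ κ₂ x a) / (s - a)) / (s - a)|
        ≤ C * supNorm x := by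
  refine ⟨2*M₁ + 2*M₂, ?_⟩
  intro κ₁ κ₂ D1κ₁ D1κ₂ D2κ₁ D2κ₂ hκ₁ hκ₂ hdiag hD11 hD12 hD21 hD22 hB11 hB12 hB21 hB22
  intro n hn j hj1 hjn a ha s hs hne x hx Kx' hKx'
  -- basic facts
  have hn0 : (0:ℝ) < n := by exact_mod_cast hn
  have hj1' : (1:ℝ) ≤ (j:ℝ) := by exact_mod_cast hj1
  have hjn' : (j:ℝ) ≤ (n:ℝ) := by exact_mod_cast hjn
  have hl : (0:ℝ) ≤ ((j:ℝ) - 1) / n := div_nonneg (by linarith) hn0.le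
  have hr : ((j:ℝ)) / n ≤ 1 := by rw [div_le_one hn0]; exact hjn'
  have ha01 : a ∈ Icc (0:ℝ) 1 := ⟨hl.trans ha.1, ha.2.trans hr⟩
  have hs01 : s ∈ Icc (0:ℝ) 1 := ⟨hl.trans hs.1, hs.2.trans hr⟩
  set N := supNorm x with hNdef
  have hbdd : BddAbove (range fun t : Icc (0:ℝ) 1 => |x t.1|) := by
    have himg := (isCompact_Icc.image_of_continuousOn hx.abs).bddAbove
    rwa [image_eq_range] at himg
  have hN : ∀ t ∈ Icc (0:ℝ) 1, |x t| ≤ N := fun t ht => le_ciSup hbdd ⟨t, ht⟩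
  have hN0 : 0 ≤ N := (abs_nonneg _).trans (hN 0 ⟨le_refl 0, zero_le_one⟩)
  have hM₁0 : 0 ≤ M₁ := (abs_nonneg _).trans (hB11 0 ⟨le_rfl, zero_le_one⟩ 0 ⟨le_rfl, zero_le_one⟩)
  have hM₂0 : 0 ≤ M₂ := (abs_nonneg _).trans (hB21 0 ⟨le_rfl, zero_le_one⟩ 0 ⟨le_rfl, zero_le_one⟩)
  -- the domains
  set Ω₁ : Set (ℝ×ℝ) := {p : ℝ × ℝ | 0 ≤ p.2 ∧ p.2 ≤ p.1 ∧ p.1 ≤ 1} with hΩ₁def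
  set Ω₂ : Set (ℝ×ℝ) := {p : ℝ × ℝ | 0 ≤ p.1 ∧ p.1 ≤ p.2 ∧ p.2 ≤ 1} with hΩ₂def
  have hconv₁ : Convex ℝ Ω₁ := by
    intro p hp q hq u v hu hv huv
    simp only [hΩ₁def, mem_setOf_eq, Prod.fst_add, Prod.snd_add, Prod.smul_fst, Prod.smul_snd,
      smul_eq_mul] at *
    refine ⟨?_, ?_, ?_⟩ <;> nlinarith [hp.1, hp.2.1, hp.2.2, hq.1, hq.2.1, hq.2.2]
  have hconv₂ : Convex ℝ Ω₂ := by
    intro p hp q hq u v hu hv huv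
    simp only [hΩ₂def, mem_setOf_eq, Prod.fst_add, Prod.snd_add, Prod.smul_fst, Prod.smul_snd,
      smul_eq_mul] at *
    refine ⟨?_, ?_, ?_⟩ <;> nlinarith [hp.1, hp.2.1, hp.2.2, hq.1, hq.2.1, hq.2.2]
  have hint₁ : (interior Ω₁).Nonempty := by
    refine ⟨((3/4 : ℝ), (1/4:ℝ)), mem_interior.mpr ⟨{p : ℝ×ℝ | 0 < p.2 ∧ p.2 < p.1 ∧ p.1 < 1}, ?_, ?_, ?_⟩⟩
    · intro p hp; exact ⟨hp.1.le, hp.2.1.le, hp.2.2.le⟩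
    · exact (isOpen_lt continuous_const continuous_snd).inter
        ((isOpen_lt continuous_snd continuous_fst).inter (isOpen_lt continuous_fst continuous_const))
    · norm_num
  have hint₂ : (interior Ω₂).Nonempty := by
    refine ⟨((1/4 : ℝ), (3/4:ℝ)), mem_interior.mpr ⟨{p : ℝ×ℝ | 0 < p.1 ∧ p.1 < p.2 ∧ p.2 < 1}, ?_, ?_, ?_⟩⟩
    · intro p hp; exact ⟨hp.1.le, hp.2.1.le, hp.2.2.le⟩
    · exact (isOpen_lt continuous_const continuous_fst).inter
        ((isOpen_lt continuous_fst continuous_snd).inter (isOpen_lt continuous_snd continuous_const))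
    · norm_num
  have hU₁ : UniqueDiffOn ℝ Ω₁ := uniqueDiffOn_convex hconv₁ hint₁
  have hU₂ : UniqueDiffOn ℝ Ω₂ := uniqueDiffOn_convex hconv₂ hint₂
  -- canonical partial derivatives
  set d₁ : ℝ → ℝ → ℝ := fun u t => (fderivWithin ℝ (Function.uncurry κ₁) Ω₁ (u, t)) (1, 0) with hd₁def
  set d₂ : ℝ → ℝ → ℝ := fun u t => (fderivWithin ℝ (Function.uncurry κ₂) Ω₂ (u, t)) (1, 0) with hd₂def
  have hder₁ : ∀ t ∈ Icc (0:ℝ) 1, ∀ u ∈ Icc t 1,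
      HasDerivWithinAt (fun v => κ₁ v t) (d₁ u t) (Icc t 1) u := by
    intro t ht u hu
    have hmem : (u, t) ∈ Ω₁ := ⟨ht.1, hu.1, hu.2⟩
    have hF := ((hκ₁.differentiableOn (by norm_num)) _ hmem).hasFDerivWithinAt
    have hg : HasDerivWithinAt (fun v : ℝ => (v, t)) ((1:ℝ), (0:ℝ)) (Icc t 1) u :=
      ((hasDerivAt_id' u).prodMk (hasDerivAt_const u t)).hasDerivWithinAt
    have hmaps : MapsTo (fun v : ℝ => (v, t)) (Icc t 1) Ω₁ := fun v hv => ⟨ht.1, hv.1, hv.2⟩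
    exact hF.comp_hasDerivWithinAt u hg hmaps
  have hder₂ : ∀ t ∈ Icc (0:ℝ) 1, ∀ u ∈ Icc (0:ℝ) t,
      HasDerivWithinAt (fun v => κ₂ v t) (d₂ u t) (Icc (0:ℝ) t) u := by
    intro t ht u hu
    have hmem : (u, t) ∈ Ω₂ := ⟨hu.1, hu.2, ht.2⟩
    have hF := ((hκ₂.differentiableOn (by norm_num)) _ hmem).hasFDerivWithinAt
    have hg : HasDerivWithinAt (fun v : ℝ => (v, t)) ((1:ℝ), (0:ℝ)) (Icc (0:ℝ) t) u :=
      ((hasDerivAt_id' u).prodMk (hasDerivAt_const u t)).hasDerivWithinAt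
    have hmaps : MapsTo (fun v : ℝ => (v, t)) (Icc (0:ℝ) t) Ω₂ := fun v hv => ⟨hv.1, hv.2, ht.2⟩
    exact hF.comp_hasDerivWithinAt u hg hmaps
  have hpin₁ : ∀ t ∈ Ico (0:ℝ) 1, ∀ u ∈ Icc t 1, d₁ u t = D1κ₁ u t := by
    intro t ht u hu
    have hU := (uniqueDiffOn_Icc ht.2) u hu
    rw [← (hder₁ t ⟨ht.1, ht.2.le⟩ u hu).derivWithin hU]
    exact (hD11 t ⟨ht.1, ht.2.le⟩ u hu).derivWithin hU
  have hpin₂ : ∀ t ∈ Ioc (0:ℝ) 1, ∀ u ∈ Icc (0:ℝ) t, d₂ u t = D1κ₂ u t := by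
    intro t ht u hu
    have hU := (uniqueDiffOn_Icc ht.1) u hu
    rw [← (hder₂ t ⟨ht.1.le, ht.2⟩ u hu).derivWithin hU]
    exact (hD12 t ⟨ht.1.le, ht.2⟩ u hu).derivWithin hU
  -- bounds for canonical derivatives
  have hb₁ : ∀ t ∈ Ico (0:ℝ) 1, ∀ u ∈ Icc t 1, |d₁ u t| ≤ M₁ := by
    intro t ht u hu
    rw [hpin₁ t ht u hu]; exact hB11 t ⟨ht.1, ht.2.le⟩ u hu
  have hb₂ : ∀ t ∈ Ioc (0:ℝ) 1, ∀ u ∈ Icc (0:ℝ) t, |d₂ u t| ≤ M₁ := by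
    intro t ht u hu
    rw [hpin₂ t ht u hu]; exact hB12 t ⟨ht.1.le, ht.2⟩ u hu
  -- continuity of slices
  have hf'₁ : ContinuousOn (fderivWithin ℝ (Function.uncurry κ₁) Ω₁) Ω₁ :=
    hκ₁.continuousOn_fderivWithin hU₁ (by norm_num)
  have hf'₂ : ContinuousOn (fderivWithin ℝ (Function.uncurry κ₂) Ω₂) Ω₂ :=
    hκ₂.continuousOn_fderivWithin hU₂ (by norm_num)
  have hcd₁ : ∀ c ∈ Icc (0:ℝ) 1, ContinuousOn (fun t => d₁ c t * x t) (Icc 0 c) := by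
    intro c hc
    have hmaps : MapsTo (fun t : ℝ => (c, t)) (Icc 0 c) Ω₁ := fun t ht => ⟨ht.1, ht.2, hc.2⟩
    have h1 : ContinuousOn (fun t : ℝ => fderivWithin ℝ (Function.uncurry κ₁) Ω₁ (c, t)) (Icc 0 c) :=
      hf'₁.comp ((continuous_const.prodMk continuous_id).continuousOn) hmaps
    exact (h1.clm_apply continuousOn_const).mul (hx.mono (Icc_subset_Icc le_rfl hc.2))
  have hcd₂ : ∀ c ∈ Icc (0:ℝ) 1, ContinuousOn (fun t => d₂ c t * x t) (Icc c 1) := by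
    intro c hc
    have hmaps : MapsTo (fun t : ℝ => (c, t)) (Icc c 1) Ω₂ := fun t ht => ⟨hc.1, ht.1, ht.2⟩
    have h1 : ContinuousOn (fun t : ℝ => fderivWithin ℝ (Function.uncurry κ₂) Ω₂ (c, t)) (Icc c 1) :=
      hf'₂.comp ((continuous_const.prodMk continuous_id).continuousOn) hmaps
    exact (h1.clm_apply continuousOn_const).mul (hx.mono (Icc_subset_Icc hc.1 le_rfl))
  have hcκ₁ : ∀ c ∈ Icc (0:ℝ) 1, ContinuousOn (fun t => κ₁ c t * x t) (Icc 0 c) := by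
    intro c hc
    have hmaps : MapsTo (fun t : ℝ => (c, t)) (Icc 0 c) Ω₁ := fun t ht => ⟨ht.1, ht.2, hc.2⟩
    have h1 : ContinuousOn (fun t : ℝ => Function.uncurry κ₁ (c, t)) (Icc 0 c) :=
      hκ₁.continuousOn.comp ((continuous_const.prodMk continuous_id).continuousOn) hmaps
    exact h1.mul (hx.mono (Icc_subset_Icc le_rfl hc.2))
  have hcκ₂ : ∀ c ∈ Icc (0:ℝ) 1, ContinuousOn (fun t => κ₂ c t * x t) (Icc c 1) := by
    intro c hc
    have hmaps : MapsTo (fun t : ℝ => (c, t)) (Icc c 1) Ω₂ := fun t ht => ⟨hc.1, ht.1, ht.2⟩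
    have h1 : ContinuousOn (fun t : ℝ => Function.uncurry κ₂ (c, t)) (Icc c 1) :=
      hκ₂.continuousOn.comp ((continuous_const.prodMk continuous_id).continuousOn) hmaps
    exact h1.mul (hx.mono (Icc_subset_Icc hc.1 le_rfl))
  -- interval integrability
  have hIIK : ∀ c ∈ Icc (0:ℝ) 1, IntervalIntegrable
      (fun t => (if t ≤ c then κ₁ c t else κ₂ c t) * x t) volume 0 1 := by
    intro c hc
    simp only [ite_mul]
    exact stmt3_II hc.1 hc.2 (hcκ₁ c hc) (hcκ₂ c hc)
  have hIIF : IntervalIntegrable (fun t => (if t ≤ s then d₁ s t else d₂ s t) * x t) volume 0 1 := by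
    simp only [ite_mul]
    exact stmt3_II hs01.1 hs01.2 (hcd₁ s hs01) (hcd₂ s hs01)
  set Fs : ℝ := ∫ t in (0:ℝ)..1, (if t ≤ s then d₁ s t else d₂ s t) * x t with hFsdef
  have KEY : ∀ b ∈ Icc (0:ℝ) 1, b ≠ s →
      |Kop κ₁ κ₂ x b - Kop κ₁ κ₂ x s - (b - s) * Fs| ≤ (2*M₁+2*M₂) * N * (b - s)^2 := by
    intro b hb01 hbs
    set m := min b s with hmdef
    set M := max b s with hMdef
    have hm0 : 0 ≤ m := le_min hb01.1 hs01.1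
    have hM1 : M ≤ 1 := max_le hb01.2 hs01.2
    have hmM : m < M := min_lt_max.mpr hbs
    have hm1 : m ≤ 1 := hmM.le.trans hM1
    have hM0 : 0 ≤ M := hm0.trans hmM.le
    have hMm : M - m = |b - s| := by rw [hMdef, hmdef, max_sub_min_eq_abs, abs_sub_comm]
    set H : ℝ → ℝ := fun t => (if t ≤ b then κ₁ b t else κ₂ b t) * x t
        - (if t ≤ s then κ₁ s t else κ₂ s t) * x t
        - (b - s) * ((if t ≤ s then d₁ s t else d₂ s t) * x t) with hHdef
    have hIIH : IntervalIntegrable H volume 0 1 :=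
      ((hIIK b hb01).sub (hIIK s hs01)).sub (hIIF.const_mul (b - s))
    have hsplit : Kop κ₁ κ₂ x b - Kop κ₁ κ₂ x s - (b - s) * Fs = ∫ t in (0:ℝ)..1, H t := by
      rw [hHdef]
      unfold Kop
      rw [hFsdef,
        intervalIntegral.integral_sub ((hIIK b hb01).sub (hIIK s hs01)) (hIIF.const_mul (b-s)),
        intervalIntegral.integral_sub (hIIK b hb01) (hIIK s hs01),
        intervalIntegral.integral_const_mul]
    have h011 : uIcc (0:ℝ) 1 = Icc 0 1 := uIcc_of_le zero_le_one
    have hsub1 : IntervalIntegrable H volume 0 m :=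
      hIIH.mono_set (uIcc_subset_uIcc (by rw [h011]; exact ⟨le_rfl, zero_le_one⟩)
        (by rw [h011]; exact ⟨hm0, hm1⟩))
    have hsub2 : IntervalIntegrable H volume m M :=
      hIIH.mono_set (uIcc_subset_uIcc (by rw [h011]; exact ⟨hm0, hm1⟩)
        (by rw [h011]; exact ⟨hM0, hM1⟩))
    have hsub3 : IntervalIntegrable H volume M 1 :=
      hIIH.mono_set (uIcc_subset_uIcc (by rw [h011]; exact ⟨hM0, hM1⟩)
        (by rw [h011]; exact ⟨zero_le_one, le_rfl⟩))
    have e1 := intervalIntegral.integral_add_adjacent_intervals hsub1 hsub2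
    have e2 := intervalIntegral.integral_add_adjacent_intervals (hsub1.trans hsub2) hsub3
    have hP1 : |∫ t in (0:ℝ)..m, H t| ≤ M₂ * (b-s)^2 * N := by
      have hbound : ∀ t ∈ uIoc (0:ℝ) m, ‖H t‖ ≤ M₂ * (b-s)^2 * N := by
        intro t ht
        rw [uIoc_of_le hm0] at ht
        obtain ⟨ht0, htm⟩ := ht
        have htb : t ≤ b := htm.trans (min_le_left b s)
        have hts : t ≤ s := htm.trans (min_le_right b s)
        have ht1 : t < 1 := lt_of_le_of_lt htm (hmM.trans_le hM1)
        have htI : t ∈ Icc (0:ℝ) 1 := ⟨ht0.le, ht1.le⟩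
        have hUsub : uIcc b s ⊆ Icc t 1 := fun u hu => ⟨htm.trans hu.1, hu.2.trans hM1⟩
        have htay := stmt3_taylor2 (f := fun u => κ₁ u t) (f' := fun u => D1κ₁ u t)
          (f'' := fun u => D2κ₁ u t) (b := b) (s := s) (M₂ := M₂)
          (fun u hu => (hD11 t htI u (hUsub hu)).mono hUsub)
          (fun u hu => (hD21 t htI u (hUsub hu)).mono hUsub)
          (fun u hu => hB21 t htI u (hUsub hu))
        have hxt : |x t| ≤ N := hN t htI
        have hE : ‖H t‖ = |κ₁ b t - κ₁ s t - (b - s) * D1κ₁ s t| * |x t| := by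
          simp only [hHdef, if_pos htb, if_pos hts]
          rw [hpin₁ t ⟨ht0.le, ht1⟩ s ⟨hts, hs01.2⟩]
          rw [Real.norm_eq_abs, ← abs_mul]
          congr 1; ring
        rw [hE]
        exact mul_le_mul htay hxt (abs_nonneg _) (by positivity)
      have hcc := intervalIntegral.norm_integral_le_of_norm_le_const hbound
      rw [Real.norm_eq_abs] at hcc
      calc |∫ t in (0:ℝ)..m, H t| ≤ (M₂ * (b-s)^2 * N) * |m - 0| := hcc
        _ ≤ (M₂ * (b-s)^2 * N) * 1 := by
            apply mul_le_mul_of_nonneg_left _ (by positivity)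
            rw [sub_zero, abs_of_nonneg hm0]; exact hm1
        _ = M₂ * (b-s)^2 * N := mul_one _
    have hP3 : |∫ t in M..(1:ℝ), H t| ≤ M₂ * (b-s)^2 * N := by
      have hbound : ∀ t ∈ uIoc M (1:ℝ), ‖H t‖ ≤ M₂ * (b-s)^2 * N := by
        intro t ht
        rw [uIoc_of_le hM1] at ht
        obtain ⟨htM, ht1⟩ := ht
        have htb : ¬ (t ≤ b) := not_le.mpr (lt_of_le_of_lt (le_max_left b s) htM)
        have hts : ¬ (t ≤ s) := not_le.mpr (lt_of_le_of_lt (le_max_right b s) htM)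
        have ht0 : 0 < t := lt_of_le_of_lt hM0 htM
        have htI : t ∈ Icc (0:ℝ) 1 := ⟨ht0.le, ht1⟩
        have hUsub : uIcc b s ⊆ Icc (0:ℝ) t := fun u hu => ⟨hm0.trans hu.1, hu.2.trans htM.le⟩
        have htay := stmt3_taylor2 (f := fun u => κ₂ u t) (f' := fun u => D1κ₂ u t)
          (f'' := fun u => D2κ₂ u t) (b := b) (s := s) (M₂ := M₂)
          (fun u hu => (hD12 t htI u (hUsub hu)).mono hUsub)
          (fun u hu => (hD22 t htI u (hUsub hu)).mono hUsub)
          (fun u hu => hB22 t htI u (hUsub hu))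
        have hxt : |x t| ≤ N := hN t htI
        have hE : ‖H t‖ = |κ₂ b t - κ₂ s t - (b - s) * D1κ₂ s t| * |x t| := by
          simp only [hHdef, if_neg htb, if_neg hts]
          rw [hpin₂ t ⟨ht0, ht1⟩ s ⟨hs01.1, (le_max_right b s).trans htM.le⟩]
          rw [Real.norm_eq_abs, ← abs_mul]
          congr 1; ring
        rw [hE]
        exact mul_le_mul htay hxt (abs_nonneg _) (by positivity)
      have hcc := intervalIntegral.norm_integral_le_of_norm_le_const hbound
      rw [Real.norm_eq_abs] at hcc
      calc |∫ t in M..(1:ℝ), H t| ≤ (M₂ * (b-s)^2 * N) * |1 - M| := hcc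
        _ ≤ (M₂ * (b-s)^2 * N) * 1 := by
            apply mul_le_mul_of_nonneg_left _ (by positivity)
            rw [abs_of_nonneg (by linarith)]; linarith
        _ = M₂ * (b-s)^2 * N := mul_one _
    have hP2 : |∫ t in m..M, H t| ≤ 2*M₁*N*(b-s)^2 := by
      have h1 : ∀ᵐ t : ℝ ∂volume, t ≠ 1 := by
        rw [MeasureTheory.ae_iff]
        simp only [ne_eq, not_not, setOf_eq_eq_singleton]
        exact measure_singleton 1
      have h1' : ∀ᵐ t : ℝ ∂(volume.restrict (uIoc m M)), t ≠ 1 := ae_restrict_of_ae h1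
      have h2 : ∀ᵐ t : ℝ ∂(volume.restrict (uIoc m M)), t ∈ uIoc m M :=
        ae_restrict_mem measurableSet_uIoc
      have hbound : ∀ᵐ t : ℝ ∂(volume.restrict (uIoc m M)), ‖H t‖ ≤ 2*M₁*|b-s| * N := by
        filter_upwards [h1', h2] with t htne ht2
        rw [uIoc_of_le hmM.le] at ht2
        obtain ⟨htm, htM⟩ := ht2
        have ht0 : 0 < t := lt_of_le_of_lt hm0 htm
        have ht1' : t ≤ 1 := htM.trans hM1
        have htI : t ∈ Icc (0:ℝ) 1 := ⟨ht0.le, ht1'⟩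
        have hdg : κ₁ t t = κ₂ t t := hdiag t htI
        have hxt : |x t| ≤ N := hN t htI
        rcases le_total b s with hbs' | hbs'
        · -- b ≤ s : m = b, M = s
          have hmb : m = b := min_eq_left hbs'
          have hMs : M = s := max_eq_right hbs'
          have htb : ¬ (t ≤ b) := not_le.mpr (hmb ▸ htm)
          have hts : t ≤ s := hMs ▸ htM
          have htlt1 : t < 1 := lt_of_le_of_ne ht1' htne
          have hL2 := Convex.norm_image_sub_le_of_norm_hasDerivWithin_le
            (f := fun u => κ₂ u t) (f' := fun u => D1κ₂ u t) (C := M₁)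
            (fun u hu => hD12 t htI u hu) (fun u hu => by
              simpa using hB12 t htI u hu)
            (convex_Icc 0 t) (x := b) (y := t) ⟨hb01.1, by rw [hmb] at htm; exact htm.le⟩
            ⟨ht0.le, le_rfl⟩
          have hL1 := Convex.norm_image_sub_le_of_norm_hasDerivWithin_le
            (f := fun u => κ₁ u t) (f' := fun u => D1κ₁ u t) (C := M₁)
            (fun u hu => hD11 t htI u hu) (fun u hu => by
              simpa using hB11 t htI u hu)
            (convex_Icc t 1) (x := t) (y := s) ⟨le_rfl, ht1'⟩ ⟨hts, hs01.2⟩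
          have hD : |D1κ₁ s t| ≤ M₁ := hB11 t htI s ⟨hts, hs01.2⟩
          have hE : ‖H t‖ = |κ₂ b t - κ₁ s t - (b - s) * D1κ₁ s t| * |x t| := by
            simp only [hHdef, if_neg htb, if_pos hts]
            rw [hpin₁ t ⟨ht0.le, htlt1⟩ s ⟨hts, hs01.2⟩]
            rw [Real.norm_eq_abs, ← abs_mul]; congr 1; ring
          rw [hE]
          have habs : |κ₂ b t - κ₁ s t - (b - s) * D1κ₁ s t| ≤ 2*M₁*|b-s| := by
            simp only [Real.norm_eq_abs] at hL1 hL2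
            rw [abs_of_nonneg (by rw [hmb] at htm; linarith : (0:ℝ) ≤ t - b)] at hL2
            rw [abs_of_nonneg (by linarith : (0:ℝ) ≤ s - t)] at hL1
            have hbs2 : |b - s| = s - b := by rw [abs_of_nonpos (by linarith)]; ring
            rw [hbs2]
            have hC : |(b - s) * D1κ₁ s t| ≤ (s - b) * M₁ := by
              rw [abs_mul, abs_of_nonpos (by linarith : b - s ≤ 0), neg_sub]
              exact mul_le_mul_of_nonneg_left hD (by linarith)
            obtain ⟨l2, r2⟩ := abs_le.mp hL2
            obtain ⟨l1, r1⟩ := abs_le.mp hL1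
            obtain ⟨lc, rc⟩ := abs_le.mp hC
            rw [abs_le]
            constructor <;> linarith only [l1, r1, l2, r2, lc, rc, hdg]
          calc |κ₂ b t - κ₁ s t - (b - s) * D1κ₁ s t| * |x t| ≤ (2*M₁*|b-s|) * N :=
                mul_le_mul habs hxt (abs_nonneg _)
                  (mul_nonneg (by linarith : (0:ℝ) ≤ 2*M₁) (abs_nonneg _))
            _ = 2*M₁*|b-s| * N := by ring
        · -- s ≤ b : m = s, M = b
          have hms : m = s := min_eq_right hbs'
          have hMb : M = b := max_eq_left hbs'
          have hts : ¬ (t ≤ s) := not_le.mpr (hms ▸ htm)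
          have htb : t ≤ b := hMb ▸ htM
          have hstle : s ≤ t := (hms ▸ htm).le
          have hL1 := Convex.norm_image_sub_le_of_norm_hasDerivWithin_le
            (f := fun u => κ₁ u t) (f' := fun u => D1κ₁ u t) (C := M₁)
            (fun u hu => hD11 t htI u hu) (fun u hu => by
              simpa using hB11 t htI u hu)
            (convex_Icc t 1) (x := t) (y := b) ⟨le_rfl, ht1'⟩ ⟨htb, hb01.2⟩
          have hL2 := Convex.norm_image_sub_le_of_norm_hasDerivWithin_le
            (f := fun u => κ₂ u t) (f' := fun u => D1κ₂ u t) (C := M₁)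
            (fun u hu => hD12 t htI u hu) (fun u hu => by
              simpa using hB12 t htI u hu)
            (convex_Icc 0 t) (x := s) (y := t) ⟨hs01.1, hstle⟩ ⟨ht0.le, le_rfl⟩
          have hD : |D1κ₂ s t| ≤ M₁ := hB12 t htI s ⟨hs01.1, hstle⟩
          have hE : ‖H t‖ = |κ₁ b t - κ₂ s t - (b - s) * D1κ₂ s t| * |x t| := by
            simp only [hHdef, if_pos htb, if_neg hts]
            rw [hpin₂ t ⟨ht0, ht1'⟩ s ⟨hs01.1, hstle⟩]
            rw [Real.norm_eq_abs, ← abs_mul]; congr 1; ring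
          rw [hE]
          have habs : |κ₁ b t - κ₂ s t - (b - s) * D1κ₂ s t| ≤ 2*M₁*|b-s| := by
            simp only [Real.norm_eq_abs] at hL1 hL2
            rw [abs_of_nonneg (by linarith [hMb ▸ htM] : (0:ℝ) ≤ b - t)] at hL1
            rw [abs_of_nonneg (by linarith : (0:ℝ) ≤ t - s)] at hL2
            have hbs2 : |b - s| = b - s := abs_of_nonneg (by linarith)
            rw [hbs2]
            have hC : |(b - s) * D1κ₂ s t| ≤ (b - s) * M₁ := by
              rw [abs_mul, abs_of_nonneg (by linarith : (0:ℝ) ≤ b - s)]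
              exact mul_le_mul_of_nonneg_left hD (by linarith)
            obtain ⟨l1, r1⟩ := abs_le.mp hL1
            obtain ⟨l2, r2⟩ := abs_le.mp hL2
            obtain ⟨lc, rc⟩ := abs_le.mp hC
            rw [abs_le]
            constructor <;> linarith only [l1, r1, l2, r2, lc, rc, hdg]
          calc |κ₁ b t - κ₂ s t - (b - s) * D1κ₂ s t| * |x t| ≤ (2*M₁*|b-s|) * N :=
                mul_le_mul habs hxt (abs_nonneg _)
                  (mul_nonneg (by linarith : (0:ℝ) ≤ 2*M₁) (abs_nonneg _))
            _ = 2*M₁*|b-s| * N := by ring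
      have hP2' := intervalIntegral.norm_integral_le_abs_of_norm_le hbound intervalIntegrable_const
      rw [Real.norm_eq_abs, intervalIntegral.integral_const, smul_eq_mul] at hP2'
      calc |∫ t in m..M, H t| ≤ |(M - m) * (2*M₁*|b-s| * N)| := hP2'
        _ = (M - m) * (2*M₁*|b-s| * N) := abs_of_nonneg
            (mul_nonneg (by linarith)
              (mul_nonneg (mul_nonneg (by linarith) (abs_nonneg _)) hN0))
        _ = 2*M₁*N*(b-s)^2 := by rw [hMm, ← sq_abs (b - s)]; ring
    rw [hsplit, ← e2, ← e1]
    calc |(∫ t in (0:ℝ)..m, H t) + (∫ t in m..M, H t) + ∫ t in M..(1:ℝ), H t|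
        ≤ |(∫ t in (0:ℝ)..m, H t) + (∫ t in m..M, H t)| + |∫ t in M..(1:ℝ), H t| := abs_add_le _ _
      _ ≤ |∫ t in (0:ℝ)..m, H t| + |∫ t in m..M, H t| + |∫ t in M..(1:ℝ), H t| := by
          have := abs_add_le (∫ t in (0:ℝ)..m, H t) (∫ t in m..M, H t); linarith
      _ ≤ M₂ * (b-s)^2 * N + 2*M₁*N*(b-s)^2 + M₂ * (b-s)^2 * N := by linarith
      _ = (2*M₁+2*M₂) * N * (b-s)^2 := by ring
  -- Kop has derivative Fs at s within [0,1]
  have hder : HasDerivWithinAt (Kop κ₁ κ₂ x) Fs (Icc (0:ℝ) 1) s := by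
    rw [hasDerivWithinAt_iff_tendsto_slope, tendsto_iff_norm_sub_tendsto_zero]
    apply squeeze_zero' (g := fun u => (2*M₁+2*M₂) * N * |u - s|)
      (Filter.Eventually.of_forall fun u => norm_nonneg _)
    · filter_upwards [self_mem_nhdsWithin] with u hu
      obtain ⟨hu01, hus⟩ := hu
      have hne' : u ≠ s := hus
      have hk := KEY u hu01 hne'
      have h0 : u - s ≠ 0 := sub_ne_zero.mpr hne'
      rw [slope_def_field, Real.norm_eq_abs]
      rw [show (Kop κ₁ κ₂ x u - Kop κ₁ κ₂ x s) / (u - s) - Fs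
          = (Kop κ₁ κ₂ x u - Kop κ₁ κ₂ x s - (u - s) * Fs) / (u - s) by field_simp]
      rw [abs_div, div_le_iff₀ (abs_pos.mpr h0)]
      calc |Kop κ₁ κ₂ x u - Kop κ₁ κ₂ x s - (u - s) * Fs|
          ≤ (2*M₁+2*M₂) * N * (u - s)^2 := hk
        _ = (2*M₁+2*M₂) * N * |u - s| * |u - s| := by
            rw [mul_assoc ((2*M₁+2*M₂) * N), abs_mul_abs_self, ← sq, mul_assoc]
    · have hc : Filter.Tendsto (fun u : ℝ => (2*M₁+2*M₂) * N * |u - s|) (nhds s)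
          (nhds ((2*M₁+2*M₂) * N * |s - s|)) := by
        apply Filter.Tendsto.mul tendsto_const_nhds
        exact (continuous_abs.comp (continuous_id.sub continuous_const)).tendsto s
      have := hc.mono_left (nhdsWithin_le_nhds (s := Icc (0:ℝ) 1 \ {s}))
      simpa using this
  -- identify Kx' s with Fs
  have hKs : Kx' s = Fs := by
    have hU := (uniqueDiffOn_Icc (zero_lt_one)) s hs01
    rw [← (hKx' s hs01).derivWithin hU, hder.derivWithin hU]
  -- conclusion
  have hsa : s - a ≠ 0 := sub_ne_zero.mpr (Ne.symm hne)
  have hk := KEY a ha01 hne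
  have hsq : (0:ℝ) < (s - a)^2 := by
    have := pow_pos (abs_pos.mpr hsa) 2
    rwa [sq_abs] at this
  rw [hKs]
  rw [show (Fs - (Kop κ₁ κ₂ x s - Kop κ₁ κ₂ x a) / (s - a)) / (s - a)
      = (Kop κ₁ κ₂ x a - Kop κ₁ κ₂ x s - (a - s) * Fs) / ((s - a)^2) by field_simp; ring]
  rw [abs_div, abs_of_nonneg (sq_nonneg (s - a)), div_le_iff₀ hsq]
  calc |Kop κ₁ κ₂ x a - Kop κ₁ κ₂ x s - (a - s) * Fs|
      ≤ (2*M₁+2*M₂) * N * (a - s)^2 := hk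
    _ = (2*M₁ + 2*M₂) * N * (s - a)^2 := by ring
end

section
/- There exists a constant C, depending only on r, the relative nodes ζ₀,…,ζ_{2r}, M₁, and M₂ (and in particular independent of n, j, s, and x), such that for every n ≥ 1, every j ∈ {1,…,n}, every x ∈ C[0,1], and every s ∈ [t_{j−1}, t_j] distinct from the collocation points τ_j^0,…,τ_j^{2r}, the divided difference of Kx satisfies |[τ_j^0, τ_j^1, …, τ_j^{2r}, s]Kx| ≤ C‖x‖∞ h^{−2r}. -/
open Set MeasureTheory
open Finset

/-- Newton divided difference `[p 0, …, p m] f` of `f` at `m+1` (distinct) points. -/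
noncomputable def divDiff : (m : ℕ) → (Fin (m + 1) → ℝ) → (ℝ → ℝ) → ℝ
  | 0, p, f => f (p 0)
  | m + 1, p, f =>
      (divDiff m (fun i => p i.succ) f - divDiff m (fun i => p i.castSucc) f) /
        (p (Fin.last (m + 1)) - p 0)


lemma divDiff_succ (m : ℕ) (p : Fin (m+2) → ℝ) (f : ℝ → ℝ) :
    divDiff (m+1) p f =
      (divDiff m (fun i => p i.succ) f - divDiff m (fun i => p i.castSucc) f) /
        (p (Fin.last (m + 1)) - p 0) := rfl

lemma divDiff_sub_const (m : ℕ) (p : Fin (m+2) → ℝ) (f : ℝ → ℝ) (c : ℝ) :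
    divDiff (m+1) p (fun u => f u - c) = divDiff (m+1) p f := by
  induction m with
  | zero => show ((f (p 1) - c) - (f (p 0) - c))/_ = _; rw [divDiff_succ]; show _ = (f (p 1) - f (p 0))/_; ring
  | succ m ih => rw [divDiff_succ, divDiff_succ _ _ f, ih, ih]

lemma erase_succ_eq (m : ℕ) (i : Fin (m+1)) :
    (univ : Finset (Fin (m+2))).erase i.succ
      = insert (0 : Fin (m+2)) ((univ.erase i).image Fin.succ) := by
  ext j
  simp only [Finset.mem_erase, Finset.mem_univ, and_true, Finset.mem_insert, Finset.mem_image, true_and]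
  constructor
  · intro hj
    rcases eq_or_ne j 0 with h0 | h0
    · exact Or.inl h0
    · obtain ⟨k, rfl⟩ := Fin.exists_succ_eq.mpr h0
      exact Or.inr ⟨k, fun h => hj (by rw [h]), rfl⟩
  · rintro (rfl | ⟨k, hk, rfl⟩)
    · exact (Fin.succ_ne_zero i).symm
    · simpa [Fin.succ_inj] using hk

lemma erase_castSucc_eq (m : ℕ) (i : Fin (m+1)) :
    (univ : Finset (Fin (m+2))).erase i.castSucc
      = insert (Fin.last (m+1)) ((univ.erase i).image Fin.castSucc) := by
  ext j
  simp only [Finset.mem_erase, Finset.mem_univ, and_true, Finset.mem_insert, Finset.mem_image, true_and]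
  constructor
  · intro hj
    rcases eq_or_ne j (Fin.last (m+1)) with h0 | h0
    · exact Or.inl h0
    · obtain ⟨k, rfl⟩ := Fin.exists_castSucc_eq.mpr h0
      exact Or.inr ⟨k, fun h => hj (by rw [h]), rfl⟩
  · rintro (rfl | ⟨k, hk, rfl⟩)
    · exact (Fin.castSucc_lt_last i).ne'
    · simpa [Fin.castSucc_inj] using hk

lemma prod_ne_zero_of_inj {M : ℕ} (p : Fin (M+1) → ℝ) (hp : Function.Injective p)
    (i : Fin (M+1)) : ∏ j ∈ univ.erase i, (p i - p j) ≠ 0 := by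
  rw [Finset.prod_ne_zero_iff]
  intro j hj
  exact sub_ne_zero.mpr (fun h => (Finset.mem_erase.mp hj).1 (hp h).symm)

lemma divDiff_lagrange (m : ℕ) (p : Fin (m+1) → ℝ) (hp : Function.Injective p) (f : ℝ → ℝ) :
    divDiff m p f = ∑ i, f (p i) * (∏ j ∈ univ.erase i, (p i - p j))⁻¹ := by
  induction m with
  | zero =>
    show f (p 0) = _
    rw [Fin.sum_univ_one]
    simp
  | succ m ih =>
    have hps : Function.Injective (fun i : Fin (m+1) => p i.succ) :=
      hp.comp (Fin.succ_injective _)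
    have hpc : Function.Injective (fun i : Fin (m+1) => p i.castSucc) :=
      hp.comp (Fin.castSucc_injective _)
    have hD : p (Fin.last (m+1)) - p 0 ≠ 0 := by
      refine sub_ne_zero.mpr (fun h => ?_)
      have := congrArg Fin.val (hp h)
      simp [Fin.val_zero, Fin.val_last] at this
    -- key product identities
    have hQs : ∀ i : Fin (m+1),
        (∏ j ∈ univ.erase i, (p i.succ - p j.succ))⁻¹
          = (p i.succ - p 0) * (∏ j ∈ univ.erase i.succ, (p i.succ - p j))⁻¹ := by
      intro i
      have h1 : ∏ j ∈ univ.erase i.succ, (p i.succ - p j)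
          = (p i.succ - p 0) * ∏ j ∈ univ.erase i, (p i.succ - p j.succ) := by
        rw [erase_succ_eq, Finset.prod_insert, Finset.prod_image]
        · intro a _ b _ h; exact Fin.succ_injective _ h
        · simp only [Finset.mem_image, not_exists]
          rintro a ⟨-, h⟩
          exact Fin.succ_ne_zero a h
      rw [h1, mul_inv]
      rw [← mul_assoc, mul_inv_cancel₀ (sub_ne_zero.mpr (fun h => Fin.succ_ne_zero i (hp h))), one_mul]
    have hQc : ∀ i : Fin (m+1),
        (∏ j ∈ univ.erase i, (p i.castSucc - p j.castSucc))⁻¹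
          = (p i.castSucc - p (Fin.last (m+1))) * (∏ j ∈ univ.erase i.castSucc, (p i.castSucc - p j))⁻¹ := by
      intro i
      have h1 : ∏ j ∈ univ.erase i.castSucc, (p i.castSucc - p j)
          = (p i.castSucc - p (Fin.last (m+1))) * ∏ j ∈ univ.erase i, (p i.castSucc - p j.castSucc) := by
        rw [erase_castSucc_eq, Finset.prod_insert, Finset.prod_image]
        · intro a _ b _ h; exact Fin.castSucc_injective _ h
        · simp only [Finset.mem_image, not_exists]
          rintro a ⟨-, h⟩
          exact (Fin.castSucc_lt_last a).ne h
      rw [h1, mul_inv]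
      rw [← mul_assoc, mul_inv_cancel₀
        (sub_ne_zero.mpr (fun h => (Fin.castSucc_lt_last i).ne (hp h))), one_mul]
    rw [divDiff_succ, ih _ hps, ih _ hpc]
    set Q : Fin (m+2) → ℝ := fun i => (∏ j ∈ univ.erase i, (p i - p j))⁻¹ with hQ
    have e1 : ∑ i : Fin (m+1), f (p i.succ) * (∏ j ∈ univ.erase i, (p i.succ - p j.succ))⁻¹
        = ∑ i : Fin (m+2), (p i - p 0) * (f (p i) * Q i) := by
      conv_rhs => rw [Fin.sum_univ_succ]
      simp only [sub_self, zero_mul, zero_add]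
      exact Finset.sum_congr rfl (fun i _ => by rw [hQs i]; ring)
    have e2 : ∑ i : Fin (m+1), f (p i.castSucc) * (∏ j ∈ univ.erase i, (p i.castSucc - p j.castSucc))⁻¹
        = ∑ i : Fin (m+2), (p i - p (Fin.last (m+1))) * (f (p i) * Q i) := by
      conv_rhs => rw [Fin.sum_univ_castSucc]
      simp only [sub_self, zero_mul, add_zero]
      exact Finset.sum_congr rfl (fun i _ => by rw [hQc i]; ring)
    rw [e1, e2, ← Finset.sum_sub_distrib]
    rw [div_eq_iff hD, Finset.sum_mul]
    exact Finset.sum_congr rfl (fun i _ => by ring)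

lemma snoc_injective {M : ℕ} {g : Fin M → ℝ} {s : ℝ} (hg : Function.Injective g)
    (hs : ∀ k, s ≠ g k) : Function.Injective (Fin.snoc g s : Fin (M+1) → ℝ) := by
  intro a b hab
  induction a using Fin.lastCases with
  | last =>
    induction b using Fin.lastCases with
    | last => rfl
    | cast b =>
      rw [Fin.snoc_last, Fin.snoc_castSucc] at hab
      exact absurd hab (hs b)
  | cast a =>
    induction b using Fin.lastCases with
    | last =>
      rw [Fin.snoc_last, Fin.snoc_castSucc] at hab
      exact absurd hab.symm (hs a)
    | cast b =>
      rw [Fin.snoc_castSucc, Fin.snoc_castSucc] at hab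
      rw [hg hab]

lemma prod_snoc_split {M : ℕ} (g : Fin (M+1) → ℝ) (s c : ℝ) (i : Fin (M+1)) :
    ∏ j ∈ univ.erase (Fin.castSucc i), (c - (Fin.snoc g s : Fin (M+2) → ℝ) j)
      = (c - s) * ∏ j ∈ univ.erase i, (c - g j) := by
  rw [erase_castSucc_eq, Finset.prod_insert, Finset.prod_image]
  · simp only [Fin.snoc_castSucc, Fin.snoc_last]
  · intro a _ b _ h; exact Fin.castSucc_injective _ h
  · simp only [Finset.mem_image, not_exists]
    rintro a ⟨-, h⟩
    exact (Fin.castSucc_lt_last a).ne h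


lemma contOn_glue {f : ℝ → ℝ} {a b c : ℝ} (hab : a ≤ b) (hbc : b ≤ c)
    (h1 : ContinuousOn f (Icc a b)) (h2 : ContinuousOn f (Icc b c)) :
    ContinuousOn f (Icc a c) := by
  rw [← Icc_union_Icc_eq_Icc hab hbc]
  intro y hy
  have c1 : ContinuousWithinAt f (Icc a b) y := by
    by_cases h : y ∈ Icc a b
    · exact h1 y h
    · exact continuousWithinAt_of_notMem_closure (by rwa [isClosed_Icc.closure_eq])
  have c2 : ContinuousWithinAt f (Icc b c) y := by
    by_cases h : y ∈ Icc b c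
    · exact h2 y h
    · exact continuousWithinAt_of_notMem_closure (by rwa [isClosed_Icc.closure_eq])
  exact c1.union c2

lemma kernel_contOn (κ₁ κ₂ : ℝ → ℝ → ℝ)
    (hκ1 : ContDiffOn ℝ 2 (Function.uncurry κ₁) {p : ℝ × ℝ | 0 ≤ p.2 ∧ p.2 ≤ p.1 ∧ p.1 ≤ 1})
    (hκ2 : ContDiffOn ℝ 2 (Function.uncurry κ₂) {p : ℝ × ℝ | 0 ≤ p.1 ∧ p.1 ≤ p.2 ∧ p.2 ≤ 1})
    (hdiag : ∀ s ∈ Icc (0:ℝ) 1, κ₁ s s = κ₂ s s)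
    (c : ℝ) (hc : c ∈ Icc (0:ℝ) 1) :
    ContinuousOn (fun t => (if t ≤ c then κ₁ c t else κ₂ c t)) (Icc (0:ℝ) 1) := by
  have h1 : ContinuousOn (fun t => κ₁ c t) (Icc 0 c) := by
    have : ContinuousOn (fun t : ℝ => Function.uncurry κ₁ (c, t)) (Icc 0 c) := by
      apply hκ1.continuousOn.comp (by fun_prop)
      intro t ht
      exact ⟨ht.1, ht.2, hc.2⟩
    exact this
  have h2 : ContinuousOn (fun t => κ₂ c t) (Icc c 1) := by
    have : ContinuousOn (fun t : ℝ => Function.uncurry κ₂ (c, t)) (Icc c 1) := by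
      apply hκ2.continuousOn.comp (by fun_prop)
      intro t ht
      exact ⟨hc.1, ht.1, ht.2⟩
    exact this
  apply contOn_glue hc.1 hc.2
  · exact h1.congr (fun t ht => if_pos ht.2)
  · apply h2.congr
    intro t ht
    dsimp only
    by_cases h : t ≤ c
    · have htc : t = c := le_antisymm h ht.1
      rw [if_pos h, htc, hdiag c hc]
    · rw [if_neg h]

lemma kernel_lip (κ₁ κ₂ D1κ₁ D1κ₂ : ℝ → ℝ → ℝ) (M₁ : ℝ)
    (hdiag : ∀ s ∈ Icc (0:ℝ) 1, κ₁ s s = κ₂ s s)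
    (hd1 : ∀ t ∈ Icc (0:ℝ) 1, ∀ s ∈ Icc t 1,
      HasDerivWithinAt (fun u => κ₁ u t) (D1κ₁ s t) (Icc t 1) s)
    (hd2 : ∀ t ∈ Icc (0:ℝ) 1, ∀ s ∈ Icc (0:ℝ) t,
      HasDerivWithinAt (fun u => κ₂ u t) (D1κ₂ s t) (Icc (0:ℝ) t) s)
    (hb1 : ∀ t ∈ Icc (0:ℝ) 1, ∀ s ∈ Icc t 1, |D1κ₁ s t| ≤ M₁)
    (hb2 : ∀ t ∈ Icc (0:ℝ) 1, ∀ s ∈ Icc (0:ℝ) t, |D1κ₂ s t| ≤ M₁)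
    (t : ℝ) (ht : t ∈ Icc (0:ℝ) 1) :
    ∀ a ∈ Icc (0:ℝ) 1, ∀ b ∈ Icc (0:ℝ) 1,
      |(if t ≤ b then κ₁ b t else κ₂ b t) - (if t ≤ a then κ₁ a t else κ₂ a t)|
        ≤ M₁ * |b - a| := by
  have lip1 : ∀ u ∈ Icc t 1, ∀ v ∈ Icc t 1, |κ₁ v t - κ₁ u t| ≤ M₁ * |v - u| := by
    intro u hu v hv
    have := Convex.norm_image_sub_le_of_norm_hasDerivWithin_le
      (f := fun u => κ₁ u t) (f' := fun s => D1κ₁ s t)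
      (fun s hs => hd1 t ht s hs) (fun s hs => by rw [Real.norm_eq_abs]; exact hb1 t ht s hs)
      (convex_Icc t 1) hu hv
    simpa [Real.norm_eq_abs] using this
  have lip2 : ∀ u ∈ Icc (0:ℝ) t, ∀ v ∈ Icc (0:ℝ) t, |κ₂ v t - κ₂ u t| ≤ M₁ * |v - u| := by
    intro u hu v hv
    have := Convex.norm_image_sub_le_of_norm_hasDerivWithin_le
      (f := fun u => κ₂ u t) (f' := fun s => D1κ₂ s t)
      (fun s hs => hd2 t ht s hs) (fun s hs => by rw [Real.norm_eq_abs]; exact hb2 t ht s hs)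
      (convex_Icc 0 t) hu hv
    simpa [Real.norm_eq_abs] using this
  -- first, the ordered case
  have main : ∀ a ∈ Icc (0:ℝ) 1, ∀ b ∈ Icc (0:ℝ) 1, a ≤ b →
      |(if t ≤ b then κ₁ b t else κ₂ b t) - (if t ≤ a then κ₁ a t else κ₂ a t)|
        ≤ M₁ * |b - a| := by
    intro a ha b hb hab
    rcases le_or_gt t a with hta | hta
    · rw [if_pos (hta.trans hab), if_pos hta]
      exact lip1 a ⟨hta, ha.2⟩ b ⟨hta.trans hab, hb.2⟩
    · rw [if_neg (not_le.mpr hta)]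
      rcases le_or_gt t b with htb | htb
      · rw [if_pos htb]
        have hM : 0 ≤ M₁ := le_trans (abs_nonneg _) (hb1 t ht t ⟨le_rfl, ht.2⟩)
        calc |κ₁ b t - κ₂ a t| ≤ |κ₁ b t - κ₁ t t| + |κ₁ t t - κ₂ a t| := abs_sub_le _ _ _
          _ = |κ₁ b t - κ₁ t t| + |κ₂ t t - κ₂ a t| := by rw [hdiag t ht]
          _ ≤ M₁ * |b - t| + M₁ * |t - a| :=
              add_le_add (lip1 t ⟨le_rfl, ht.2⟩ b ⟨htb, hb.2⟩)
                (lip2 a ⟨ha.1, hta.le⟩ t ⟨ht.1, le_rfl⟩)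
          _ ≤ M₁ * |b - a| := by
              rw [abs_of_nonneg (by linarith : (0:ℝ) ≤ b - t),
                abs_of_nonneg (by linarith : (0:ℝ) ≤ t - a),
                abs_of_nonneg (by linarith : (0:ℝ) ≤ b - a)]
              nlinarith
      · rw [if_neg (not_le.mpr htb)]
        exact lip2 a ⟨ha.1, hta.le⟩ b ⟨hb.1, htb.le⟩
  intro a ha b hb
  rcases le_total a b with hab | hab
  · exact main a ha b hb hab
  · rw [abs_sub_comm, abs_sub_comm b a]
    exact main b hb a ha hab

lemma supNorm_bound (x : ℝ → ℝ) (hx : ContinuousOn x (Icc (0:ℝ) 1)) :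
    (∀ t ∈ Icc (0:ℝ) 1, |x t| ≤ supNorm x) ∧ 0 ≤ supNorm x := by
  obtain ⟨b, hb⟩ := isCompact_Icc.exists_bound_of_continuousOn hx
  have hbdd : BddAbove (range fun t : Icc (0:ℝ) 1 => |x t.1|) := by
    refine ⟨b, ?_⟩
    rintro y ⟨t, rfl⟩
    simpa [Real.norm_eq_abs] using hb t.1 t.2
  have h1 : ∀ t ∈ Icc (0:ℝ) 1, |x t| ≤ supNorm x := fun t ht => le_ciSup hbdd ⟨t, ht⟩
  exact ⟨h1, le_trans (abs_nonneg _) (h1 0 ⟨le_rfl, zero_le_one⟩)⟩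

lemma Kop_lip (κ₁ κ₂ D1κ₁ D1κ₂ : ℝ → ℝ → ℝ) (M₁ : ℝ) (hM : 0 ≤ M₁)
    (hκ1 : ContDiffOn ℝ 2 (Function.uncurry κ₁) {p : ℝ × ℝ | 0 ≤ p.2 ∧ p.2 ≤ p.1 ∧ p.1 ≤ 1})
    (hκ2 : ContDiffOn ℝ 2 (Function.uncurry κ₂) {p : ℝ × ℝ | 0 ≤ p.1 ∧ p.1 ≤ p.2 ∧ p.2 ≤ 1})
    (hdiag : ∀ s ∈ Icc (0:ℝ) 1, κ₁ s s = κ₂ s s)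
    (hd1 : ∀ t ∈ Icc (0:ℝ) 1, ∀ s ∈ Icc t 1,
      HasDerivWithinAt (fun u => κ₁ u t) (D1κ₁ s t) (Icc t 1) s)
    (hd2 : ∀ t ∈ Icc (0:ℝ) 1, ∀ s ∈ Icc (0:ℝ) t,
      HasDerivWithinAt (fun u => κ₂ u t) (D1κ₂ s t) (Icc (0:ℝ) t) s)
    (hb1 : ∀ t ∈ Icc (0:ℝ) 1, ∀ s ∈ Icc t 1, |D1κ₁ s t| ≤ M₁)
    (hb2 : ∀ t ∈ Icc (0:ℝ) 1, ∀ s ∈ Icc (0:ℝ) t, |D1κ₂ s t| ≤ M₁)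
    (x : ℝ → ℝ) (hx : ContinuousOn x (Icc (0:ℝ) 1))
    (a : ℝ) (ha : a ∈ Icc (0:ℝ) 1) (b : ℝ) (hb : b ∈ Icc (0:ℝ) 1) :
    |Kop κ₁ κ₂ x b - Kop κ₁ κ₂ x a| ≤ M₁ * supNorm x * |b - a| := by
  obtain ⟨hxle, hsn0⟩ := supNorm_bound x hx
  have hint : ∀ c ∈ Icc (0:ℝ) 1,
      IntervalIntegrable (fun t => (if t ≤ c then κ₁ c t else κ₂ c t) * x t) volume 0 1 := by
    intro c hc
    apply ContinuousOn.intervalIntegrable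
    rw [Set.uIcc_of_le zero_le_one]
    exact (kernel_contOn κ₁ κ₂ hκ1 hκ2 hdiag c hc).mul hx
  have heq : Kop κ₁ κ₂ x b - Kop κ₁ κ₂ x a
      = ∫ t in (0:ℝ)..1, ((if t ≤ b then κ₁ b t else κ₂ b t) * x t
          - (if t ≤ a then κ₁ a t else κ₂ a t) * x t) := by
    rw [intervalIntegral.integral_sub (hint b hb) (hint a ha)]; rfl
  rw [heq, ← Real.norm_eq_abs]
  have hbnd := intervalIntegral.norm_integral_le_of_norm_le_const
    (C := M₁ * |b - a| * supNorm x)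
    (f := fun t => (if t ≤ b then κ₁ b t else κ₂ b t) * x t
      - (if t ≤ a then κ₁ a t else κ₂ a t) * x t) (a := (0:ℝ)) (b := 1) ?_
  · calc _ ≤ M₁ * |b - a| * supNorm x * |1 - (0:ℝ)| := hbnd
      _ = M₁ * supNorm x * |b - a| := by simp; ring
  · intro t htI
    have ht : t ∈ Icc (0:ℝ) 1 := by
      rw [uIoc_of_le zero_le_one] at htI
      exact Ioc_subset_Icc_self htI
    rw [← sub_mul, Real.norm_eq_abs, abs_mul]
    exact mul_le_mul
      (kernel_lip κ₁ κ₂ D1κ₁ D1κ₂ M₁ hdiag hd1 hd2 hb1 hb2 t ht a ha b hb)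
      (hxle t ht) (abs_nonneg _) (by positivity)

/-- there is a constant `C` depending only on `r`, the relative nodes
`ζ₀ < ⋯ < ζ_{2r}`, `M₁` and `M₂` such that for every `n ≥ 1`, every `j ∈ {1,…,n}`, every
`x ∈ C[0,1]` and every `s ∈ [t_{j−1}, t_j]` distinct from the collocation points
`τ_j^k = t_{j−1} + ζ_k h`, one has `|[τ_j^0, …, τ_j^{2r}, s]Kx| ≤ C ‖x‖∞ h^{−2r}`. -/
theorem stmt4 (r : ℕ) (ζ : Fin (2 * r + 1) → ℝ) (M₁ M₂ : ℝ)
    (hζmono : StrictMono ζ) (hζ0 : 0 ≤ ζ 0) (hζ1 : ζ (Fin.last (2 * r)) ≤ 1) :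
    ∃ C : ℝ, ∀ κ₁ κ₂ D1κ₁ D1κ₂ D2κ₁ D2κ₂ : ℝ → ℝ → ℝ,
    -- κ₁, κ₂ are twice continuously differentiable on Ω₁, Ω₂ respectively
    ContDiffOn ℝ 2 (Function.uncurry κ₁) {p : ℝ × ℝ | 0 ≤ p.2 ∧ p.2 ≤ p.1 ∧ p.1 ≤ 1} →
    ContDiffOn ℝ 2 (Function.uncurry κ₂) {p : ℝ × ℝ | 0 ≤ p.1 ∧ p.1 ≤ p.2 ∧ p.2 ≤ 1} →
    -- they agree on the diagonal
    (∀ s ∈ Icc (0:ℝ) 1, κ₁ s s = κ₂ s s) →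
    -- D1κᵢ is the partial derivative ∂κᵢ/∂s on Ωᵢ and D2κᵢ is ∂²κᵢ/∂s² on Ωᵢ
    (∀ t ∈ Icc (0:ℝ) 1, ∀ s ∈ Icc t 1,
      HasDerivWithinAt (fun u => κ₁ u t) (D1κ₁ s t) (Icc t 1) s) →
    (∀ t ∈ Icc (0:ℝ) 1, ∀ s ∈ Icc (0:ℝ) t,
      HasDerivWithinAt (fun u => κ₂ u t) (D1κ₂ s t) (Icc (0:ℝ) t) s) →
    (∀ t ∈ Icc (0:ℝ) 1, ∀ s ∈ Icc t 1,
      HasDerivWithinAt (fun u => D1κ₁ u t) (D2κ₁ s t) (Icc t 1) s) →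
    (∀ t ∈ Icc (0:ℝ) 1, ∀ s ∈ Icc (0:ℝ) t,
      HasDerivWithinAt (fun u => D1κ₂ u t) (D2κ₂ s t) (Icc (0:ℝ) t) s) →
    -- |∂κᵢ/∂s| ≤ M₁ and |∂²κᵢ/∂s²| ≤ M₂ on Ωᵢ
    (∀ t ∈ Icc (0:ℝ) 1, ∀ s ∈ Icc t 1, |D1κ₁ s t| ≤ M₁) →
    (∀ t ∈ Icc (0:ℝ) 1, ∀ s ∈ Icc (0:ℝ) t, |D1κ₂ s t| ≤ M₁) →
    (∀ t ∈ Icc (0:ℝ) 1, ∀ s ∈ Icc t 1, |D2κ₁ s t| ≤ M₂) →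
    (∀ t ∈ Icc (0:ℝ) 1, ∀ s ∈ Icc (0:ℝ) t, |D2κ₂ s t| ≤ M₂) →
    ∀ n : ℕ, 1 ≤ n → ∀ j : ℕ, 1 ≤ j → j ≤ n →
    ∀ x : ℝ → ℝ, ContinuousOn x (Icc (0:ℝ) 1) →
    ∀ s ∈ Icc (((j:ℝ) - 1) / n) ((j:ℝ) / n),
      (∀ k : Fin (2 * r + 1), s ≠ ((j:ℝ) - 1) / n + ζ k / n) →
      |divDiff (2 * r + 1)
          (Fin.snoc (fun k : Fin (2 * r + 1) => ((j:ℝ) - 1) / n + ζ k / n) s)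
          (Kop κ₁ κ₂ x)|
        ≤ C * supNorm x / ((1 / (n:ℝ)) ^ (2 * r)) := by
  refine ⟨|M₁| * ∑ i : Fin (2*r+1), |∏ j' ∈ Finset.univ.erase i, (ζ i - ζ j')|⁻¹, ?_⟩
  intro κ₁ κ₂ D1κ₁ D1κ₂ D2κ₁ D2κ₂ hκ1 hκ2 hdiag hd1 hd2 _ _ hb1 hb2 _ _
    n hn j hj1 hjn x hx s hs hsk
  have hn1 : (1:ℝ) ≤ (n:ℝ) := by exact_mod_cast hn
  have hn0 : (0:ℝ) < (n:ℝ) := by linarith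
  have hj1' : (1:ℝ) ≤ (j:ℝ) := by exact_mod_cast hj1
  have hjn' : (j:ℝ) ≤ (n:ℝ) := by exact_mod_cast hjn
  have hM0 : 0 ≤ M₁ :=
    le_trans (abs_nonneg _) (hb1 0 ⟨le_rfl, zero_le_one⟩ 0 ⟨le_rfl, zero_le_one⟩)
  set τ : Fin (2*r+1) → ℝ := fun k => ((j:ℝ) - 1) / (n:ℝ) + ζ k / (n:ℝ) with hτdef
  have hζmem : ∀ k, ζ k ∈ Icc (0:ℝ) 1 := fun k =>
    ⟨hζ0.trans (hζmono.monotone (Fin.zero_le k)),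
     (hζmono.monotone (Fin.le_last k)).trans hζ1⟩
  have hτmem : ∀ k, τ k ∈ Icc (0:ℝ) 1 := by
    intro k
    simp only [hτdef]
    constructor
    · exact add_nonneg (div_nonneg (by linarith) hn0.le) (div_nonneg (hζmem k).1 hn0.le)
    · calc ((j:ℝ)-1)/(n:ℝ) + ζ k/(n:ℝ) ≤ ((j:ℝ)-1)/(n:ℝ) + 1/(n:ℝ) := by
            gcongr
            exact (hζmem k).2
        _ = (j:ℝ)/(n:ℝ) := by ring
        _ ≤ 1 := by rw [div_le_one hn0]; exact hjn'
  have hs01 : s ∈ Icc (0:ℝ) 1 :=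
    ⟨le_trans (div_nonneg (by linarith) hn0.le) hs.1,
     le_trans hs.2 (by rw [div_le_one hn0]; exact hjn')⟩
  have hτinj : Function.Injective τ := by
    intro a b hab
    apply hζmono.injective
    simp only [hτdef] at hab
    have h2 : ζ a / (n:ℝ) = ζ b / (n:ℝ) := by linarith
    field_simp [hn0.ne'] at h2
    exact h2
  have hsne : ∀ k, s ≠ τ k := by
    intro k
    simp only [hτdef]
    exact hsk k
  have hpinj : Function.Injective (Fin.snoc τ s : Fin (2*r+1+1) → ℝ) :=
    snoc_injective hτinj hsne
  have key : divDiff (2*r+1) (Fin.snoc τ s) (Kop κ₁ κ₂ x)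
      = ∑ i : Fin (2*r+1), (Kop κ₁ κ₂ x (τ i) - Kop κ₁ κ₂ x s)
          * ((τ i - s) * ∏ j' ∈ Finset.univ.erase i, (τ i - τ j'))⁻¹ := by
    rw [← divDiff_sub_const (2*r) (Fin.snoc τ s) (Kop κ₁ κ₂ x) (Kop κ₁ κ₂ x s)]
    rw [divDiff_lagrange (2*r+1) _ hpinj]
    rw [Fin.sum_univ_castSucc]
    simp only [Fin.snoc_last, sub_self, zero_mul, add_zero, Fin.snoc_castSucc]
    exact Finset.sum_congr rfl (fun i _ => by rw [prod_snoc_split])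
  have hZne : ∀ i : Fin (2*r+1), ∏ j' ∈ Finset.univ.erase i, (ζ i - ζ j') ≠ 0 :=
    prod_ne_zero_of_inj ζ hζmono.injective
  have hprod : ∀ i : Fin (2*r+1), ∏ j' ∈ Finset.univ.erase i, (τ i - τ j')
      = (∏ j' ∈ Finset.univ.erase i, (ζ i - ζ j')) * ((n:ℝ)⁻¹)^(2*r) := by
    intro i
    calc ∏ j' ∈ Finset.univ.erase i, (τ i - τ j')
        = ∏ j' ∈ Finset.univ.erase i, ((ζ i - ζ j') * (n:ℝ)⁻¹) :=
          Finset.prod_congr rfl (fun j' _ => by simp only [hτdef]; ring)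
      _ = (∏ j' ∈ Finset.univ.erase i, (ζ i - ζ j')) * ((n:ℝ)⁻¹)^(2*r) := by
          rw [Finset.prod_mul_distrib, Finset.prod_const,
            Finset.card_erase_of_mem (Finset.mem_univ i), Finset.card_univ, Fintype.card_fin]
          norm_num
  have hterm : ∀ i : Fin (2*r+1),
      |(Kop κ₁ κ₂ x (τ i) - Kop κ₁ κ₂ x s)
          * ((τ i - s) * ∏ j' ∈ Finset.univ.erase i, (τ i - τ j'))⁻¹|
        ≤ M₁ * supNorm x
            * (|∏ j' ∈ Finset.univ.erase i, (ζ i - ζ j')|⁻¹ * (n:ℝ)^(2*r)) := by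
    intro i
    have hd : |τ i - s| ≠ 0 := abs_ne_zero.mpr (sub_ne_zero.mpr (fun h => hsne i h.symm))
    have habs : |((τ i - s) * ∏ j' ∈ Finset.univ.erase i, (τ i - τ j'))|⁻¹
        = |τ i - s|⁻¹ * (|∏ j' ∈ Finset.univ.erase i, (ζ i - ζ j')|⁻¹ * (n:ℝ)^(2*r)) := by
      rw [hprod i, abs_mul, abs_mul, abs_pow, abs_inv, abs_of_pos hn0,
        mul_inv, mul_inv, ← inv_pow, inv_inv]
    obtain ⟨hxle, hsn0⟩ := supNorm_bound x hx
    calc |(Kop κ₁ κ₂ x (τ i) - Kop κ₁ κ₂ x s)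
          * ((τ i - s) * ∏ j' ∈ Finset.univ.erase i, (τ i - τ j'))⁻¹|
        = |Kop κ₁ κ₂ x (τ i) - Kop κ₁ κ₂ x s|
            * (|τ i - s|⁻¹ * (|∏ j' ∈ Finset.univ.erase i, (ζ i - ζ j')|⁻¹ * (n:ℝ)^(2*r))) := by
          rw [abs_mul, abs_inv, habs]
      _ ≤ (M₁ * supNorm x * |τ i - s|)
            * (|τ i - s|⁻¹ * (|∏ j' ∈ Finset.univ.erase i, (ζ i - ζ j')|⁻¹ * (n:ℝ)^(2*r))) := by
          refine mul_le_mul_of_nonneg_right ?_ (by positivity)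
          exact Kop_lip κ₁ κ₂ D1κ₁ D1κ₂ M₁ hM0 hκ1 hκ2 hdiag hd1 hd2 hb1 hb2 x hx
            s hs01 (τ i) (hτmem i)
      _ = (M₁ * supNorm x) * ((|τ i - s| * |τ i - s|⁻¹)
            * (|∏ j' ∈ Finset.univ.erase i, (ζ i - ζ j')|⁻¹ * (n:ℝ)^(2*r))) := by ring
      _ = M₁ * supNorm x
            * (|∏ j' ∈ Finset.univ.erase i, (ζ i - ζ j')|⁻¹ * (n:ℝ)^(2*r)) := by
          rw [mul_inv_cancel₀ hd, one_mul]
  obtain ⟨hxle, hsn0⟩ := supNorm_bound x hx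
  rw [key]
  calc |∑ i : Fin (2*r+1), (Kop κ₁ κ₂ x (τ i) - Kop κ₁ κ₂ x s)
          * ((τ i - s) * ∏ j' ∈ Finset.univ.erase i, (τ i - τ j'))⁻¹|
      ≤ ∑ i : Fin (2*r+1), |(Kop κ₁ κ₂ x (τ i) - Kop κ₁ κ₂ x s)
          * ((τ i - s) * ∏ j' ∈ Finset.univ.erase i, (τ i - τ j'))⁻¹| :=
        Finset.abs_sum_le_sum_abs _ _
    _ ≤ ∑ i : Fin (2*r+1), M₁ * supNorm x
          * (|∏ j' ∈ Finset.univ.erase i, (ζ i - ζ j')|⁻¹ * (n:ℝ)^(2*r)) :=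
        Finset.sum_le_sum (fun i _ => hterm i)
    _ = (|M₁| * ∑ i : Fin (2*r+1), |∏ j' ∈ Finset.univ.erase i, (ζ i - ζ j')|⁻¹)
          * supNorm x / ((1 / (n:ℝ)) ^ (2*r)) := by
        rw [← Finset.mul_sum, ← Finset.sum_mul, abs_of_nonneg hM0,
          one_div, inv_pow, div_eq_mul_inv, inv_inv]
        ring
end

section
/- There exists a constant C, depending only on r, the relative nodes ζ₀,…,ζ_{2r}, M₁, and M₂ (and in particular independent of n, j, s, and x), such that for every n ≥ 1, every j ∈ {1,…,n}, every x ∈ C[0,1], and every s ∈ [t_{j−1}, t_j] distinct from the collocation points τ_j^0,…,τ_j^{2r}, the confluent divided difference of Kx with the point s repeated twice satisfies |[τ_j^0, τ_j^1, …, τ_j^{2r}, s, s]Kx| ≤ C‖x‖∞ h^{−2r}. -/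
open Set MeasureTheory

/-- Confluent Newton divided difference `[a 0, …, a (m-1), s, s] f` of `f` at `m` (distinct)
points together with the point `s` repeated twice, where `d = f'(s)`:
it is defined recursively by `[s,s]f = f'(s)` and
`[a₀,…,a_m,s,s]f = ([a₁,…,a_m,s,s]f − [a₀,…,a_m,s]f)/(s − a₀)`. -/
noncomputable def ddConf : (m : ℕ) → (Fin m → ℝ) → ℝ → (ℝ → ℝ) → ℝ → ℝ
  | 0, _, _, _, d => d
  | m + 1, a, s, f, d =>
      (ddConf m (fun i => a i.succ) s f d - divDiff (m + 1) (Fin.snoc a s) f) / (s - a 0)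

noncomputable def ddSum (m : ℕ) (p : Fin (m + 1) → ℝ) (f : ℝ → ℝ) : ℝ :=
  ∑ i : Fin (m + 1), f (p i) * (∏ j ∈ Finset.univ.erase i, (p i - p j))⁻¹

lemma prod_sub_ne_zero {m : ℕ} {p : Fin m → ℝ} (hp : Function.Injective p)
    (i : Fin m) (s : Finset (Fin m)) (hs : i ∉ s) :
    ∏ j ∈ s, (p i - p j) ≠ 0 := by
  rw [Finset.prod_ne_zero_iff]
  intro j hj
  have hji : j ≠ i := by rintro rfl; exact hs hj
  exact sub_ne_zero.2 fun h => hji (hp h.symm)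

lemma erase_zero_eq_image (m : ℕ) :
    ((Finset.univ : Finset (Fin (m + 2))).erase 0) = Finset.univ.image Fin.succ := by
  ext j
  simp only [Finset.mem_erase, Finset.mem_univ, and_true, Finset.mem_image, true_and]
  constructor
  · intro h
    obtain ⟨k, hk⟩ := Fin.exists_succ_eq.2 h
    exact ⟨k, hk⟩
  · rintro ⟨k, rfl⟩; exact Fin.succ_ne_zero k

lemma erase_last_eq_image (m : ℕ) :
    ((Finset.univ : Finset (Fin (m + 2))).erase (Fin.last (m + 1))) = Finset.univ.image Fin.castSucc := by
  ext j
  simp only [Finset.mem_erase, Finset.mem_univ, and_true, Finset.mem_image, true_and]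
  constructor
  · intro h
    obtain ⟨k, hk⟩ := Fin.exists_castSucc_eq.2 h
    exact ⟨k, hk⟩
  · rintro ⟨k, rfl⟩; exact (Fin.castSucc_lt_last k).ne

lemma erase_erase_zero_eq_image {m : ℕ} (i : Fin (m + 1)) :
    (((Finset.univ : Finset (Fin (m + 2))).erase i.succ).erase 0) = (Finset.univ.erase i).image Fin.succ := by
  rw [Finset.erase_right_comm, erase_zero_eq_image, ← Finset.image_erase (Fin.succ_injective _)]

lemma erase_erase_last_eq_image {m : ℕ} (i : Fin (m + 1)) :
    (((Finset.univ : Finset (Fin (m + 2))).erase i.castSucc).erase (Fin.last (m + 1)))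
      = (Finset.univ.erase i).image Fin.castSucc := by
  rw [Finset.erase_right_comm, erase_last_eq_image,
    ← Finset.image_erase (Fin.castSucc_injective _)]

lemma divDiff_eq_ddSum (f : ℝ → ℝ) :
    ∀ (m : ℕ) (p : Fin (m + 1) → ℝ), Function.Injective p → divDiff m p f = ddSum m p f := by
  intro m
  induction m with
  | zero =>
    intro p hp
    simp [divDiff, ddSum]
  | succ m ih =>
    intro p hp
    have hsucc : Function.Injective fun i : Fin (m + 1) => p i.succ :=
      hp.comp (Fin.succ_injective _)
    have hcast : Function.Injective fun i : Fin (m + 1) => p i.castSucc :=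
      hp.comp (Fin.castSucc_injective _)
    have hlast0 : (Fin.last (m + 1)) ≠ (0 : Fin (m + 2)) := by
      simp [Fin.ext_iff]
    have h0l : p (Fin.last (m + 1)) - p 0 ≠ 0 :=
      sub_ne_zero.2 fun h => hlast0 (hp h)
    set P : Fin (m + 2) → ℝ := fun i => ∏ j ∈ Finset.univ.erase i, (p i - p j) with hP
    set P0 : Fin (m + 2) → ℝ := fun i => ∏ j ∈ (Finset.univ.erase i).erase 0, (p i - p j) with hP0
    set Pl : Fin (m + 2) → ℝ :=
      fun i => ∏ j ∈ (Finset.univ.erase i).erase (Fin.last (m + 1)), (p i - p j) with hPl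
    have hA : ddSum m (fun i => p i.succ) f =
        ∑ i ∈ (Finset.univ : Finset (Fin (m + 2))).erase 0, f (p i) * (P0 i)⁻¹ := by
      rw [ddSum, erase_zero_eq_image, Finset.sum_image (fun a _ b _ h => Fin.succ_injective _ h)]
      refine Finset.sum_congr rfl fun i _ => ?_
      congr 2
      rw [hP0]
      simp only
      rw [erase_erase_zero_eq_image,
        Finset.prod_image (fun a _ b _ h => Fin.succ_injective _ h)]
    have hB : ddSum m (fun i => p i.castSucc) f =
        ∑ i ∈ (Finset.univ : Finset (Fin (m + 2))).erase (Fin.last (m + 1)),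
          f (p i) * (Pl i)⁻¹ := by
      rw [ddSum, erase_last_eq_image,
        Finset.sum_image (fun a _ b _ h => Fin.castSucc_injective _ h)]
      refine Finset.sum_congr rfl fun i _ => ?_
      congr 2
      rw [hPl]
      simp only
      rw [erase_erase_last_eq_image,
        Finset.prod_image (fun a _ b _ h => Fin.castSucc_injective _ h)]
    have hstep : divDiff (m + 1) p f =
        (ddSum m (fun i => p i.succ) f - ddSum m (fun i => p i.castSucc) f) /
          (p (Fin.last (m + 1)) - p 0) := by
      rw [divDiff, ih _ hsucc, ih _ hcast]
    rw [hstep, hA, hB]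
    set Mset := (((Finset.univ : Finset (Fin (m + 2))).erase 0).erase (Fin.last (m + 1))) with hMset
    have hlast_mem : Fin.last (m + 1) ∈ (Finset.univ : Finset (Fin (m + 2))).erase 0 := by
      simp [hlast0]
    have h0_mem : (0 : Fin (m + 2)) ∈ (Finset.univ : Finset (Fin (m + 2))).erase (Fin.last (m + 1)) := by
      simp [Ne.symm hlast0]
    have hAsplit : ∑ i ∈ (Finset.univ : Finset (Fin (m + 2))).erase 0, f (p i) * (P0 i)⁻¹
        = f (p (Fin.last (m + 1))) * (P0 (Fin.last (m + 1)))⁻¹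
            + ∑ i ∈ Mset, f (p i) * (P0 i)⁻¹ :=
      (Finset.add_sum_erase _ _ hlast_mem).symm
    have hBsplit : ∑ i ∈ (Finset.univ : Finset (Fin (m + 2))).erase (Fin.last (m + 1)),
          f (p i) * (Pl i)⁻¹
        = f (p 0) * (Pl 0)⁻¹ + ∑ i ∈ Mset, f (p i) * (Pl i)⁻¹ := by
      rw [hMset, Finset.erase_right_comm]
      exact (Finset.add_sum_erase _ _ h0_mem).symm
    have hTsplit : ddSum (m + 1) p f
        = f (p 0) * (P 0)⁻¹ + (f (p (Fin.last (m + 1))) * (P (Fin.last (m + 1)))⁻¹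
            + ∑ i ∈ Mset, f (p i) * (P i)⁻¹) := by
      rw [ddSum, ← Finset.add_sum_erase _ _ (Finset.mem_univ (0 : Fin (m + 2))),
        ← Finset.add_sum_erase _ _ hlast_mem]
    rw [hAsplit, hBsplit, hTsplit, div_eq_iff h0l]
    have key1 : ∀ i ∈ Mset,
        f (p i) * (P0 i)⁻¹ - f (p i) * (Pl i)⁻¹
          = f (p i) * (P i)⁻¹ * (p (Fin.last (m + 1)) - p 0) := by
      intro i hi
      simp only [hMset, Finset.mem_erase, Finset.mem_univ, and_true] at hi
      obtain ⟨hil, hi0⟩ := hi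
      have h0mem : (0 : Fin (m + 2)) ∈ Finset.univ.erase i := by simp [Ne.symm hi0]
      have hlmem : Fin.last (m + 1) ∈ Finset.univ.erase i := by simp [Ne.symm hil]
      have hPi0 : P i = (p i - p 0) * P0 i := (Finset.mul_prod_erase _ _ h0mem).symm
      have hPil : P i = (p i - p (Fin.last (m + 1))) * Pl i :=
        (Finset.mul_prod_erase _ _ hlmem).symm
      have hne0 : p i - p 0 ≠ 0 := sub_ne_zero.2 fun h => hi0 (hp h)
      have hnel : p i - p (Fin.last (m + 1)) ≠ 0 := sub_ne_zero.2 fun h => hil (hp h)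
      have e0 : (P0 i)⁻¹ = (p i - p 0) * (P i)⁻¹ := by
        rw [hPi0, mul_inv, ← mul_assoc, mul_inv_cancel₀ hne0, one_mul]
      have el : (Pl i)⁻¹ = (p i - p (Fin.last (m + 1))) * (P i)⁻¹ := by
        rw [hPil, mul_inv, ← mul_assoc, mul_inv_cancel₀ hnel, one_mul]
      rw [e0, el]; ring
    have key2 : f (p (Fin.last (m + 1))) * (P0 (Fin.last (m + 1)))⁻¹
        = f (p (Fin.last (m + 1))) * (P (Fin.last (m + 1)))⁻¹
            * (p (Fin.last (m + 1)) - p 0) := by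
      have h0mem : (0 : Fin (m + 2)) ∈ Finset.univ.erase (Fin.last (m + 1)) := by
        simp [Ne.symm hlast0]
      have hPi0 : P (Fin.last (m + 1)) = (p (Fin.last (m + 1)) - p 0) * P0 (Fin.last (m + 1)) :=
        (Finset.mul_prod_erase _ _ h0mem).symm
      have e0 : (P0 (Fin.last (m + 1)))⁻¹
          = (p (Fin.last (m + 1)) - p 0) * (P (Fin.last (m + 1)))⁻¹ := by
        rw [hPi0, mul_inv, ← mul_assoc, mul_inv_cancel₀ h0l, one_mul]
      rw [e0]; ring
    have key3 : f (p 0) * (Pl 0)⁻¹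
        = -(f (p 0) * (P 0)⁻¹ * (p (Fin.last (m + 1)) - p 0)) := by
      have hlmem : Fin.last (m + 1) ∈ Finset.univ.erase (0 : Fin (m + 2)) := by simp [hlast0]
      have hne : p 0 - p (Fin.last (m + 1)) ≠ 0 :=
        sub_ne_zero.2 fun h => hlast0 (hp h.symm)
      have hPi0 : P 0 = (p 0 - p (Fin.last (m + 1))) * Pl 0 :=
        (Finset.mul_prod_erase _ _ hlmem).symm
      have e0 : (Pl 0)⁻¹ = (p 0 - p (Fin.last (m + 1))) * (P 0)⁻¹ := by
        rw [hPi0, mul_inv, ← mul_assoc, mul_inv_cancel₀ hne, one_mul]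
      rw [e0]; ring
    have hsum : ∑ i ∈ Mset, f (p i) * (P0 i)⁻¹ - ∑ i ∈ Mset, f (p i) * (Pl i)⁻¹
        = ∑ i ∈ Mset, f (p i) * (P i)⁻¹ * (p (Fin.last (m + 1)) - p 0) := by
      rw [← Finset.sum_sub_distrib]
      exact Finset.sum_congr rfl key1
    have hS2 : (∑ i ∈ Mset, f (p i) * (P i)⁻¹) * (p (Fin.last (m + 1)) - p 0)
        = ∑ i ∈ Mset, f (p i) * (P i)⁻¹ * (p (Fin.last (m + 1)) - p 0) :=
      Finset.sum_mul _ _ _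
    rw [key2, key3]
    linear_combination hsum - hS2

lemma ddSum_comp_perm (m : ℕ) (p : Fin (m + 1) → ℝ) (f : ℝ → ℝ)
    (σ : Equiv.Perm (Fin (m + 1))) : ddSum m (p ∘ σ) f = ddSum m p f := by
  rw [ddSum, ddSum]
  refine Fintype.sum_equiv σ _ _ fun i => ?_
  simp only [Function.comp_apply]
  congr 2
  have himg : (Finset.univ : Finset (Fin (m + 1))).erase (σ i) = (Finset.univ.erase i).image σ := by
    rw [Finset.image_erase σ.injective, Finset.image_univ_equiv]
  rw [himg, Finset.prod_image (fun a _ b _ h => σ.injective h)]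

lemma divDiff_comp_perm (m : ℕ) (p : Fin (m + 1) → ℝ) (f : ℝ → ℝ)
    (hp : Function.Injective p) (σ : Equiv.Perm (Fin (m + 1))) :
    divDiff m (p ∘ σ) f = divDiff m p f := by
  rw [divDiff_eq_ddSum f m _ (hp.comp σ.injective), divDiff_eq_ddSum f m p hp,
    ddSum_comp_perm]

open Set in
lemma slope_mvt (f g : ℝ → ℝ) {α β : ℝ}
    (hfg : ∀ u ∈ Icc α β, HasDerivWithinAt f (g u) (Icc α β) u)
    {a b : ℝ} (ha : a ∈ Icc α β) (hb : b ∈ Icc α β) (hab : a < b) :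
    ∃ ξ ∈ Ioo a b, (f b - f a) / (b - a) = g ξ := by
  have hcont : ContinuousOn f (Icc a b) := fun u hu =>
    ((hfg u (⟨le_trans ha.1 hu.1, le_trans hu.2 hb.2⟩)).continuousWithinAt).mono
      (Icc_subset_Icc ha.1 hb.2)
  have hderiv : ∀ u ∈ Ioo a b, HasDerivAt f (g u) u := by
    intro u hu
    have hu' : u ∈ Ioo α β := ⟨lt_of_le_of_lt ha.1 hu.1, lt_of_lt_of_le hu.2 hb.2⟩
    exact (hfg u (Ioo_subset_Icc_self hu')).hasDerivAt (Icc_mem_nhds hu'.1 hu'.2)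
  obtain ⟨ξ, hξ, hslope⟩ := exists_hasDerivAt_eq_slope f g hab hcont hderiv
  exact ⟨ξ, hξ, hslope.symm⟩

open Set in
lemma divDiff_sorted_bound (f g : ℝ → ℝ) {α β : ℝ}
    (hfg : ∀ u ∈ Icc α β, HasDerivWithinAt f (g u) (Icc α β) u)
    (L e : ℝ) (he : 0 < e) (hL : 0 ≤ L)
    (hg : ∀ u ∈ Icc α β, ∀ v ∈ Icc α β, |g u - g v| ≤ L * |u - v|) :
    ∀ (m : ℕ) (p : Fin (m + 3) → ℝ), StrictMono p → (∀ i, p i ∈ Icc α β) →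
    (∀ a b : Fin (m + 3), (a : ℕ) + 3 ≤ (b : ℕ) → e ≤ p b - p a) →
    |divDiff (m + 2) p f| ≤ L * (2 / e) ^ m := by
  intro m
  induction m with
  | zero =>
    intro p hmono hmem _
    have h01 : p 0 < p 1 := hmono (by norm_num [Fin.lt_def])
    have h12 : p 1 < p 2 := hmono (by norm_num [Fin.lt_def])
    obtain ⟨ξ₂, hξ₂, hs₂⟩ := slope_mvt f g hfg (hmem 0) (hmem 1) h01
    obtain ⟨ξ₁, hξ₁, hs₁⟩ := slope_mvt f g hfg (hmem 1) (hmem 2) h12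
    have hd2 : divDiff 2 p f =
        ((f (p 2) - f (p 1)) / (p 2 - p 1) - (f (p 1) - f (p 0)) / (p 1 - p 0))
          / (p 2 - p 0) := by
      show (divDiff 1 (fun i => p i.succ) f - divDiff 1 (fun i => p i.castSucc) f) / _ = _
      have e1 : divDiff 1 (fun i : Fin 2 => p i.succ) f
          = (f (p 2) - f (p 1)) / (p 2 - p 1) := by
        show (divDiff 0 _ f - divDiff 0 _ f) / _ = _
        simp only [divDiff]
        norm_num [Fin.succ]
        congr 1
      have e2 : divDiff 1 (fun i : Fin 2 => p i.castSucc) f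
          = (f (p 1) - f (p 0)) / (p 1 - p 0) := by
        show (divDiff 0 _ f - divDiff 0 _ f) / _ = _
        simp only [divDiff]
        norm_num [Fin.succ, Fin.castSucc]
        congr 1
      rw [e1, e2]
      congr 1
    rw [hd2, hs₁, hs₂]
    have hξ : |g ξ₁ - g ξ₂| ≤ L * (p 2 - p 0) := by
      have hm1 : ξ₁ ∈ Icc α β := Icc_subset_Icc (hmem 1).1 (hmem 2).2 (Ioo_subset_Icc_self hξ₁)
      have hm2 : ξ₂ ∈ Icc α β := Icc_subset_Icc (hmem 0).1 (hmem 1).2 (Ioo_subset_Icc_self hξ₂)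
      refine le_trans (hg ξ₁ hm1 ξ₂ hm2) (mul_le_mul_of_nonneg_left ?_ hL)
      rw [abs_sub_le_iff]
      constructor <;> nlinarith [hξ₁.1, hξ₁.2, hξ₂.1, hξ₂.2]
    rw [abs_div, abs_of_pos (by linarith : (0:ℝ) < p 2 - p 0)]
    rw [div_le_iff₀ (by linarith : (0:ℝ) < p 2 - p 0)]
    simpa [pow_zero, mul_comm] using hξ
  | succ m ih =>
    intro p hmono hmem hwin
    have hde : e ≤ p (Fin.last (m + 3)) - p 0 := by
      refine hwin 0 (Fin.last (m + 3)) ?_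
      simp [Fin.last]
    have hsub1 : |divDiff (m + 2) (fun i => p i.succ) f| ≤ L * (2 / e) ^ m := by
      refine ih _ (hmono.comp (Fin.strictMono_succ)) (fun i => hmem _) ?_
      intro a b hab
      refine hwin a.succ b.succ ?_
      simp only [Fin.val_succ]
      omega
    have hsub2 : |divDiff (m + 2) (fun i => p i.castSucc) f| ≤ L * (2 / e) ^ m := by
      refine ih _ (hmono.comp (Fin.strictMono_castSucc)) (fun i => hmem _) ?_
      intro a b hab
      refine hwin a.castSucc b.castSucc ?_
      simp only [Fin.coe_castSucc]
      omega
    have hD : (0:ℝ) < p (Fin.last (m + 3)) - p 0 := lt_of_lt_of_le he hde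
    have : divDiff (m + 1 + 2) p f =
        (divDiff (m + 2) (fun i => p i.succ) f - divDiff (m + 2) (fun i => p i.castSucc) f) /
          (p (Fin.last (m + 3)) - p 0) := rfl
    rw [this, abs_div, abs_of_pos hD]
    have hnum : |divDiff (m + 2) (fun i => p i.succ) f
        - divDiff (m + 2) (fun i => p i.castSucc) f| ≤ 2 * (L * (2 / e) ^ m) := by
      calc _ ≤ |divDiff (m + 2) (fun i => p i.succ) f|
            + |divDiff (m + 2) (fun i => p i.castSucc) f| := abs_sub _ _
        _ ≤ 2 * (L * (2 / e) ^ m) := by linarith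
    calc _ ≤ (2 * (L * (2 / e) ^ m)) / e :=
          div_le_div₀ (by positivity) hnum he hde
      _ = L * (2 / e) ^ (m + 1) := by ring

lemma snoc_comp_succ {k : ℕ} (b : Fin (k + 1) → ℝ) (t : ℝ) :
    (fun i : Fin (k + 1) => (Fin.snoc b t : Fin (k + 2) → ℝ) i.succ)
      = Fin.snoc (fun i : Fin k => b i.succ) t := by
  funext i
  refine Fin.lastCases ?_ (fun j => ?_) i
  · rw [Fin.succ_last, Fin.snoc_last, Fin.snoc_last]
  · rw [Fin.snoc_castSucc, Fin.succ_castSucc, Fin.snoc_castSucc]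

open Filter in
lemma tendsto_divDiff_ddConf (f : ℝ → ℝ) {s d : ℝ} {S : Set ℝ}
    (hd : HasDerivWithinAt f d S s) :
    ∀ (m : ℕ) (a : Fin m → ℝ), (∀ i, s ≠ a i) →
    Tendsto (fun t => divDiff (m + 1) (Fin.snoc (Fin.snoc a s) t) f)
      (nhdsWithin s (S \ {s})) (nhds (ddConf m a s f d)) := by
  intro m
  induction m with
  | zero =>
    intro a _
    have hfun : (fun t => divDiff 1 (Fin.snoc (Fin.snoc a s) t) f) = slope f s := by
      funext t
      rw [slope_def_field]
      show (divDiff 0 _ f - divDiff 0 _ f) / _ = _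
      simp only [divDiff]
      norm_num [Fin.snoc]
    rw [hfun]
    show Tendsto _ _ (nhds d)
    exact hasDerivWithinAt_iff_tendsto_slope.1 hd
  | succ m ih =>
    intro a ha
    have hfun : ∀ t : ℝ, divDiff (m + 2) (Fin.snoc (Fin.snoc a s) t) f
        = (divDiff (m + 1) (Fin.snoc (Fin.snoc (fun i => a i.succ) s) t) f
            - divDiff (m + 1) (Fin.snoc a s) f) / (t - a 0) := by
      intro t
      have hunfold : divDiff (m + 2) (Fin.snoc (Fin.snoc a s) t) f
          = (divDiff (m + 1) (fun i => (Fin.snoc (Fin.snoc a s) t : Fin (m + 3) → ℝ) i.succ) f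
              - divDiff (m + 1)
                  (fun i => (Fin.snoc (Fin.snoc a s) t : Fin (m + 3) → ℝ) i.castSucc) f)
            / ((Fin.snoc (Fin.snoc a s) t : Fin (m + 3) → ℝ) (Fin.last (m + 2))
                - (Fin.snoc (Fin.snoc a s) t : Fin (m + 3) → ℝ) 0) := rfl
      rw [hunfold, snoc_comp_succ, snoc_comp_succ]
      have hcast : (fun i : Fin (m + 2) =>
            (Fin.snoc (Fin.snoc a s) t : Fin (m + 3) → ℝ) i.castSucc)
          = (Fin.snoc a s : Fin (m + 2) → ℝ) := by
        funext i; exact Fin.snoc_castSucc _ _ _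
      rw [hcast]
      have hlast : (Fin.snoc (Fin.snoc a s) t : Fin (m + 3) → ℝ) (Fin.last (m + 2)) = t :=
        Fin.snoc_last _ _
      have h0 : (Fin.snoc (Fin.snoc a s) t : Fin (m + 3) → ℝ) 0 = a 0 := by
        have h1 : (0 : Fin (m + 3)) = (0 : Fin (m + 2)).castSucc := by simp
        rw [h1, Fin.snoc_castSucc]
        have h2 : (0 : Fin (m + 2)) = (0 : Fin (m + 1)).castSucc := by simp
        rw [h2, Fin.snoc_castSucc]
      rw [hlast, h0]
    simp only [hfun]
    have hne : s - a 0 ≠ 0 := sub_ne_zero.2 (ha 0)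
    have hnum : Tendsto (fun t => divDiff (m + 1) (Fin.snoc (Fin.snoc (fun i => a i.succ) s) t) f
        - divDiff (m + 1) (Fin.snoc a s) f) (nhdsWithin s (S \ {s}))
        (nhds (ddConf m (fun i => a i.succ) s f d - divDiff (m + 1) (Fin.snoc a s) f)) :=
      (ih _ fun i => ha i.succ).sub_const _
    have hden : Tendsto (fun t : ℝ => t - a 0) (nhdsWithin s (S \ {s})) (nhds (s - a 0)) :=
      (tendsto_id.mono_left nhdsWithin_le_nhds).sub_const _
    show Tendsto _ _ (nhds (ddConf (m + 1) a s f d))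
    have : ddConf (m + 1) a s f d
        = (ddConf m (fun i => a i.succ) s f d - divDiff (m + 1) (Fin.snoc a s) f) / (s - a 0) :=
      rfl
    rw [this]
    exact hnum.div hden hne

open Set in
lemma mvt_Icc (F F' : ℝ → ℝ) {A B : ℝ}
    (hF : ∀ u ∈ Icc A B, HasDerivWithinAt F (F' u) (Icc A B) u)
    (M : ℝ) (hM : ∀ u ∈ Icc A B, |F' u| ≤ M)
    {u v : ℝ} (hu : u ∈ Icc A B) (hv : v ∈ Icc A B) : |F v - F u| ≤ M * |v - u| := by
  have := (convex_Icc A B).norm_image_sub_le_of_norm_hasDerivWithin_le hF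
    (fun z hz => by simpa [Real.norm_eq_abs] using hM z hz) hu hv
  simpa [Real.norm_eq_abs] using this

open Set in
lemma taylor_aux (F F' F'' : ℝ → ℝ) {A B : ℝ}
    (h1 : ∀ u ∈ Icc A B, HasDerivWithinAt F (F' u) (Icc A B) u)
    (h2 : ∀ u ∈ Icc A B, HasDerivWithinAt F' (F'' u) (Icc A B) u)
    (M : ℝ) (hM : ∀ u ∈ Icc A B, |F'' u| ≤ M)
    {u₀ s : ℝ} (hu₀ : u₀ ∈ Icc A B) (hs : s ∈ Icc A B) :
    |F s - F u₀ - (s - u₀) * F' u₀| ≤ M * |s - u₀| ^ 2 := by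
  have hMnn : 0 ≤ M := le_trans (abs_nonneg _) (hM u₀ hu₀)
  set J : Set ℝ := Icc (min u₀ s) (max u₀ s) with hJ
  have hJsub : J ⊆ Icc A B := Icc_subset_Icc (le_min hu₀.1 hs.1) (max_le hu₀.2 hs.2)
  have hu₀J : u₀ ∈ J := ⟨min_le_left _ _, le_max_left _ _⟩
  have hsJ : s ∈ J := ⟨min_le_right _ _, le_max_right _ _⟩
  have hstep : ∀ u ∈ J, |F' u - F' u₀| ≤ M * |s - u₀| := by
    intro u hu
    refine le_trans (mvt_Icc F' F'' h2 M hM hu₀ (hJsub hu)) ?_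
    refine mul_le_mul_of_nonneg_left ?_ hMnn
    rw [abs_sub_le_iff]
    rcases le_total u₀ s with h | h
    · rw [abs_of_nonneg (by linarith)]
      rw [hJ, min_eq_left h, max_eq_right h] at hu
      constructor <;> linarith [hu.1, hu.2]
    · rw [abs_of_nonpos (by linarith)]
      rw [hJ, min_eq_right h, max_eq_left h] at hu
      constructor <;> linarith [hu.1, hu.2]
  have hG : ∀ u ∈ J, HasDerivWithinAt (fun z => F z - z * F' u₀) (F' u - F' u₀) J u := by
    intro u hu
    have hid : HasDerivWithinAt (fun z : ℝ => z * F' u₀) (1 * F' u₀) J u :=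
      (hasDerivWithinAt_id u J).mul_const _
    have h3 := ((h1 u (hJsub hu)).mono hJsub).sub hid
    rw [one_mul] at h3
    exact h3
  have := (convex_Icc (min u₀ s) (max u₀ s)).norm_image_sub_le_of_norm_hasDerivWithin_le hG
    (fun z hz => by simpa [Real.norm_eq_abs] using hstep z hz) hu₀J hsJ
  rw [Real.norm_eq_abs, Real.norm_eq_abs] at this
  calc |F s - F u₀ - (s - u₀) * F' u₀|
      = |(F s - s * F' u₀) - (F u₀ - u₀ * F' u₀)| := by ring_nf
    _ ≤ M * |s - u₀| * |s - u₀| := this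
    _ = M * |s - u₀| ^ 2 := by ring

open Set Filter in
lemma neBot_Icc_diff {s : ℝ} (hs : s ∈ Icc (0:ℝ) 1) :
    (nhdsWithin s (Icc (0:ℝ) 1 \ {s})).NeBot := by
  rcases lt_or_eq_of_le hs.2 with h1 | h1
  · have hsub : Ioo s 1 ⊆ Icc (0:ℝ) 1 \ {s} := fun z hz =>
      ⟨⟨le_trans hs.1 hz.1.le, hz.2.le⟩, fun hz' => by
        rw [mem_singleton_iff] at hz'; exact absurd (hz' ▸ hz.1) (lt_irrefl _)⟩
    have h2 : (nhdsWithin s (Ioo s 1)).NeBot := by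
      apply mem_closure_iff_nhdsWithin_neBot.1
      rw [closure_Ioo (ne_of_lt h1)]
      exact ⟨le_refl s, h1.le⟩
    exact h2.mono (nhdsWithin_mono s hsub)
  · have hsub : Ioo (0:ℝ) 1 ⊆ Icc (0:ℝ) 1 \ {s} := fun z hz =>
      ⟨⟨hz.1.le, hz.2.le⟩, fun hz' => by
        rw [mem_singleton_iff] at hz'; rw [hz', ← h1] at hz; exact absurd hz.2 (lt_irrefl _)⟩
    have h2 : (nhdsWithin s (Ioo (0:ℝ) 1)).NeBot := by
      apply mem_closure_iff_nhdsWithin_neBot.1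
      rw [closure_Ioo (by norm_num : (0:ℝ) ≠ 1)]
      exact ⟨hs.1, hs.2⟩
    exact h2.mono (nhdsWithin_mono s hsub)

open Set MeasureTheory in
lemma kop_int (κ₁ κ₂ : ℝ → ℝ → ℝ) (x : ℝ → ℝ)
    (hk1 : ContinuousOn (Function.uncurry κ₁) {p : ℝ × ℝ | 0 ≤ p.2 ∧ p.2 ≤ p.1 ∧ p.1 ≤ 1})
    (hk2 : ContinuousOn (Function.uncurry κ₂) {p : ℝ × ℝ | 0 ≤ p.1 ∧ p.1 ≤ p.2 ∧ p.2 ≤ 1})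
    (hdiag : ∀ u ∈ Icc (0:ℝ) 1, κ₁ u u = κ₂ u u)
    (hx : ContinuousOn x (Icc 0 1))
    {s : ℝ} (hs : s ∈ Icc (0:ℝ) 1) :
    IntegrableOn (fun t => (if t ≤ s then κ₁ s t else κ₂ s t) * x t) (Icc 0 1) volume := by
  have hline : Continuous (fun t : ℝ => (s, t)) := continuous_const.prodMk continuous_id
  have hc1 : ContinuousOn (fun t => κ₁ s t * x t) (Icc 0 s) := by
    refine ContinuousOn.mul ?_ (hx.mono (Icc_subset_Icc le_rfl hs.2))
    exact hk1.comp hline.continuousOn (fun t ht => ⟨ht.1, ht.2, hs.2⟩)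
  have hc2 : ContinuousOn (fun t => κ₂ s t * x t) (Icc s 1) := by
    refine ContinuousOn.mul ?_ (hx.mono (Icc_subset_Icc hs.1 le_rfl))
    exact hk2.comp hline.continuousOn (fun t ht => ⟨hs.1, ht.1, ht.2⟩)
  have hi1 : IntegrableOn (fun t => (if t ≤ s then κ₁ s t else κ₂ s t) * x t) (Icc 0 s)
      volume := by
    refine (hc1.integrableOn_compact isCompact_Icc).congr_fun ?_ measurableSet_Icc
    intro t ht
    simp only [if_pos ht.2]
  have hi2 : IntegrableOn (fun t => (if t ≤ s then κ₁ s t else κ₂ s t) * x t) (Icc s 1)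
      volume := by
    refine (hc2.integrableOn_compact isCompact_Icc).congr_fun ?_ measurableSet_Icc
    intro t ht
    by_cases h : t ≤ s
    · have hts : t = s := le_antisymm h ht.1
      subst hts
      simp [hdiag t ⟨le_trans hs.1 ht.1, ht.2⟩]
    · simp only [if_neg h]
  exact (hi1.union hi2).mono_set (Icc_subset_Icc_union_Icc)

open Set in
lemma k_lip (κ₁ κ₂ D1κ₁ D1κ₂ : ℝ → ℝ → ℝ) (M₁ : ℝ)
    (hdiag : ∀ u ∈ Icc (0:ℝ) 1, κ₁ u u = κ₂ u u)
    (hD1 : ∀ t ∈ Icc (0:ℝ) 1, ∀ u ∈ Icc t 1,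
      HasDerivWithinAt (fun z => κ₁ z t) (D1κ₁ u t) (Icc t 1) u)
    (hD2 : ∀ t ∈ Icc (0:ℝ) 1, ∀ u ∈ Icc (0:ℝ) t,
      HasDerivWithinAt (fun z => κ₂ z t) (D1κ₂ u t) (Icc (0:ℝ) t) u)
    (hb1 : ∀ t ∈ Icc (0:ℝ) 1, ∀ u ∈ Icc t 1, |D1κ₁ u t| ≤ M₁)
    (hb2 : ∀ t ∈ Icc (0:ℝ) 1, ∀ u ∈ Icc (0:ℝ) t, |D1κ₂ u t| ≤ M₁) :
    ∀ t ∈ Icc (0:ℝ) 1, ∀ s₁ ∈ Icc (0:ℝ) 1, ∀ s₂ ∈ Icc (0:ℝ) 1,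
      |(if t ≤ s₁ then κ₁ s₁ t else κ₂ s₁ t) - (if t ≤ s₂ then κ₁ s₂ t else κ₂ s₂ t)|
        ≤ M₁ * |s₁ - s₂| := by
  have aux : ∀ t ∈ Icc (0:ℝ) 1, ∀ s₁ ∈ Icc (0:ℝ) 1, ∀ s₂ ∈ Icc (0:ℝ) 1, s₂ ≤ s₁ →
      |(if t ≤ s₁ then κ₁ s₁ t else κ₂ s₁ t) - (if t ≤ s₂ then κ₁ s₂ t else κ₂ s₂ t)|
        ≤ M₁ * |s₁ - s₂| := by
    intro t ht s₁ hs₁ s₂ hs₂ h21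
    by_cases h2 : t ≤ s₂
    · have h1 : t ≤ s₁ := le_trans h2 h21
      rw [if_pos h1, if_pos h2]
      exact mvt_Icc (fun z => κ₁ z t) (fun z => D1κ₁ z t) (hD1 t ht) M₁ (hb1 t ht)
        ⟨h2, hs₂.2⟩ ⟨h1, hs₁.2⟩
    · by_cases h1 : t ≤ s₁
      · rw [if_pos h1, if_neg h2]
        have ht1 : t ∈ Icc (0:ℝ) 1 := ht
        have e1 : |κ₁ s₁ t - κ₁ t t| ≤ M₁ * |s₁ - t| :=
          mvt_Icc (fun z => κ₁ z t) (fun z => D1κ₁ z t) (hD1 t ht) M₁ (hb1 t ht)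
            ⟨le_rfl, ht.2⟩ ⟨h1, hs₁.2⟩
        have e2 : |κ₂ t t - κ₂ s₂ t| ≤ M₁ * |t - s₂| :=
          mvt_Icc (fun z => κ₂ z t) (fun z => D1κ₂ z t) (hD2 t ht) M₁ (hb2 t ht)
            ⟨hs₂.1, (not_le.1 h2).le⟩ ⟨ht.1, le_rfl⟩
        have hsplit : κ₁ s₁ t - κ₂ s₂ t = (κ₁ s₁ t - κ₁ t t) + (κ₂ t t - κ₂ s₂ t) := by
          linarith [hdiag t ht]
        rw [hsplit]
        refine le_trans (abs_add_le _ _) ?_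
        have h2' : s₂ < t := not_le.1 h2
        rw [abs_of_nonneg (by linarith : (0:ℝ) ≤ s₁ - t),
          abs_of_nonneg (by linarith : (0:ℝ) ≤ t - s₂),
          abs_of_nonneg (by linarith : (0:ℝ) ≤ s₁ - s₂)] at *
        linarith
      · rw [if_neg h1, if_neg h2]
        have h1' : s₁ ≤ t := (not_le.1 h1).le
        exact mvt_Icc (fun z => κ₂ z t) (fun z => D1κ₂ z t) (hD2 t ht) M₁ (hb2 t ht)
          ⟨hs₂.1, le_trans h21 h1'⟩ ⟨hs₁.1, h1'⟩
  intro t ht s₁ hs₁ s₂ hs₂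
  rcases le_total s₂ s₁ with h | h
  · exact aux t ht s₁ hs₁ s₂ hs₂ h
  · rw [abs_sub_comm, abs_sub_comm s₁ s₂]
    exact aux t ht s₂ hs₂ s₁ hs₁ h

open Set in
lemma k_taylor (κ₁ κ₂ D1κ₁ D1κ₂ D2κ₁ D2κ₂ : ℝ → ℝ → ℝ) (M₂ : ℝ)
    (hD1κ₁ : ∀ t ∈ Icc (0:ℝ) 1, ∀ u ∈ Icc t 1,
      HasDerivWithinAt (fun z => κ₁ z t) (D1κ₁ u t) (Icc t 1) u)
    (hD1κ₂ : ∀ t ∈ Icc (0:ℝ) 1, ∀ u ∈ Icc (0:ℝ) t,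
      HasDerivWithinAt (fun z => κ₂ z t) (D1κ₂ u t) (Icc (0:ℝ) t) u)
    (hD2κ₁ : ∀ t ∈ Icc (0:ℝ) 1, ∀ u ∈ Icc t 1,
      HasDerivWithinAt (fun z => D1κ₁ z t) (D2κ₁ u t) (Icc t 1) u)
    (hD2κ₂ : ∀ t ∈ Icc (0:ℝ) 1, ∀ u ∈ Icc (0:ℝ) t,
      HasDerivWithinAt (fun z => D1κ₂ z t) (D2κ₂ u t) (Icc (0:ℝ) t) u)
    (hb1 : ∀ t ∈ Icc (0:ℝ) 1, ∀ u ∈ Icc t 1, |D2κ₁ u t| ≤ M₂)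
    (hb2 : ∀ t ∈ Icc (0:ℝ) 1, ∀ u ∈ Icc (0:ℝ) t, |D2κ₂ u t| ≤ M₂) :
    ∀ u₀ ∈ Icc (0:ℝ) 1, ∀ s ∈ Icc (0:ℝ) 1, ∀ t ∈ Icc (0:ℝ) 1,
      (t ≤ min u₀ s ∨ max u₀ s < t) →
      |(if t ≤ s then κ₁ s t else κ₂ s t) - (if t ≤ u₀ then κ₁ u₀ t else κ₂ u₀ t)
          - (s - u₀) * (if t ≤ u₀ then D1κ₁ u₀ t else D1κ₂ u₀ t)| ≤ M₂ * |s - u₀| ^ 2 := by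
  intro u₀ hu₀ s hs t ht hcase
  rcases hcase with h | h
  · have hts : t ≤ s := le_trans h (min_le_right _ _)
    have htu : t ≤ u₀ := le_trans h (min_le_left _ _)
    rw [if_pos hts, if_pos htu, if_pos htu]
    exact taylor_aux (fun z => κ₁ z t) (fun z => D1κ₁ z t) (fun z => D2κ₁ z t)
      (hD1κ₁ t ht) (hD2κ₁ t ht) M₂ (hb1 t ht) ⟨htu, hu₀.2⟩ ⟨hts, hs.2⟩
  · have hts : ¬ t ≤ s := not_le.2 (lt_of_le_of_lt (le_max_right u₀ s) h)
    have htu : ¬ t ≤ u₀ := not_le.2 (lt_of_le_of_lt (le_max_left u₀ s) h)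
    rw [if_neg hts, if_neg htu, if_neg htu]
    exact taylor_aux (fun z => κ₂ z t) (fun z => D1κ₂ z t) (fun z => D2κ₂ z t)
      (hD1κ₂ t ht) (hD2κ₂ t ht) M₂ (hb2 t ht) ⟨hu₀.1, (lt_of_le_of_lt (le_max_left u₀ s) h).le⟩
      ⟨hs.1, (lt_of_le_of_lt (le_max_right u₀ s) h).le⟩

open Set MeasureTheory intervalIntegral Filter in
lemma kop_quadratic (f x : ℝ → ℝ) (N M₁ M₂ : ℝ) (kk Dk : ℝ → ℝ → ℝ)
    (hM₁0 : 0 ≤ M₁) (hM₂0 : 0 ≤ M₂)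
    (hf : ∀ s, f s = ∫ t in (0:ℝ)..1, kk s t * x t)
    (hN : ∀ t ∈ Icc (0:ℝ) 1, |x t| ≤ N)
    (hint : ∀ s ∈ Icc (0:ℝ) 1, IntegrableOn (fun t => kk s t * x t) (Icc 0 1) volume)
    (hlip : ∀ t ∈ Icc (0:ℝ) 1, ∀ s₁ ∈ Icc (0:ℝ) 1, ∀ s₂ ∈ Icc (0:ℝ) 1,
      |kk s₁ t - kk s₂ t| ≤ M₁ * |s₁ - s₂|)
    (htay : ∀ u₀ ∈ Icc (0:ℝ) 1, ∀ s ∈ Icc (0:ℝ) 1, ∀ t ∈ Icc (0:ℝ) 1,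
      (t ≤ min u₀ s ∨ max u₀ s < t) →
      |kk s t - kk u₀ t - (s - u₀) * Dk u₀ t| ≤ M₂ * |s - u₀| ^ 2)
    (g : ℝ → ℝ) (hg : ∀ u ∈ Icc (0:ℝ) 1, HasDerivWithinAt f (g u) (Icc (0:ℝ) 1) u) :
    ∀ u₀ ∈ Icc (0:ℝ) 1, ∀ s ∈ Icc (0:ℝ) 1,
      |f s - f u₀ - (s - u₀) * g u₀| ≤ (4 * M₁ + 2 * M₂) * N * |s - u₀| ^ 2 := by
  intro u₀ hu₀ s₀ hs₀
  have hN0 : 0 ≤ N := le_trans (abs_nonneg _) (hN 0 (by norm_num))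
  have hII : ∀ σ ∈ Icc (0:ℝ) 1, ∀ u v : ℝ, u ∈ Icc (0:ℝ) 1 → v ∈ Icc (0:ℝ) 1 →
      IntervalIntegrable (fun t => kk σ t * x t) volume u v := by
    intro σ hσ u v hu hv
    rw [intervalIntegrable_iff]
    refine (hint σ hσ).mono_set ?_
    intro z hz
    exact ⟨le_trans (le_min hu.1 hv.1) hz.1.le, le_trans hz.2 (max_le hu.2 hv.2)⟩
  have key : ∀ s ∈ Icc (0:ℝ) 1, ∀ s' ∈ Icc (0:ℝ) 1,
      |(s' - u₀) * (f s - f u₀) - (s - u₀) * (f s' - f u₀)|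
        ≤ (4 * M₁ + 2 * M₂) * N
            * (|s - u₀| * |s' - u₀| * (|s - u₀| + |s' - u₀|)) := by
    intro s hs s' hs'
    set a := min u₀ (min s s') with ha
    set c := max u₀ (max s s') with hc
    have h0a : (0:ℝ) ≤ a := le_min hu₀.1 (le_min hs.1 hs'.1)
    have hc1 : c ≤ 1 := max_le hu₀.2 (max_le hs.2 hs'.2)
    have hac : a ≤ c := le_trans (min_le_left _ _) (le_max_left _ _)
    have ha01 : a ∈ Icc (0:ℝ) 1 := ⟨h0a, le_trans hac hc1⟩
    have hc01 : c ∈ Icc (0:ℝ) 1 := ⟨le_trans h0a hac, hc1⟩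
    have h01 : (0:ℝ) ∈ Icc (0:ℝ) 1 := by norm_num
    have h11 : (1:ℝ) ∈ Icc (0:ℝ) 1 := by norm_num
    set T : ℝ → ℝ := fun t => (s' - u₀) * (kk s t * x t - kk u₀ t * x t)
        - (s - u₀) * (kk s' t * x t - kk u₀ t * x t) with hT
    have hTint : ∀ u v : ℝ, u ∈ Icc (0:ℝ) 1 → v ∈ Icc (0:ℝ) 1 →
        IntervalIntegrable T volume u v := fun u v hu hv =>
      (((hII s hs u v hu hv).sub (hII u₀ hu₀ u v hu hv)).const_mul _).sub
        (((hII s' hs' u v hu hv).sub (hII u₀ hu₀ u v hu hv)).const_mul _)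
    have hfs : f s - f u₀ = ∫ t in (0:ℝ)..1, (kk s t * x t - kk u₀ t * x t) := by
      rw [hf, hf, ← integral_sub (hII s hs 0 1 h01 h11) (hII u₀ hu₀ 0 1 h01 h11)]
    have hfs' : f s' - f u₀ = ∫ t in (0:ℝ)..1, (kk s' t * x t - kk u₀ t * x t) := by
      rw [hf, hf, ← integral_sub (hII s' hs' 0 1 h01 h11) (hII u₀ hu₀ 0 1 h01 h11)]
    have hcomb : (s' - u₀) * (f s - f u₀) - (s - u₀) * (f s' - f u₀)
        = ∫ t in (0:ℝ)..1, T t := by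
      rw [hfs, hfs', ← intervalIntegral.integral_const_mul, ← intervalIntegral.integral_const_mul,
        ← integral_sub (((hII s hs 0 1 h01 h11).sub (hII u₀ hu₀ 0 1 h01 h11)).const_mul _)
          (((hII s' hs' 0 1 h01 h11).sub (hII u₀ hu₀ 0 1 h01 h11)).const_mul _)]
    have hsplit : (∫ t in (0:ℝ)..1, T t)
        = (∫ t in (0:ℝ)..a, T t) + (∫ t in a..c, T t) + (∫ t in c..(1:ℝ), T t) := by
      have e1 : (∫ t in a..c, T t) + (∫ t in c..(1:ℝ), T t) = ∫ t in a..(1:ℝ), T t :=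
        integral_add_adjacent_intervals (hTint a c ha01 hc01) (hTint c 1 hc01 h11)
      have e2 : (∫ t in (0:ℝ)..a, T t) + (∫ t in a..(1:ℝ), T t) = ∫ t in (0:ℝ)..1, T t :=
        integral_add_adjacent_intervals (hTint 0 a h01 ha01) (hTint a 1 ha01 h11)
      rw [add_assoc, e1, e2]
    have hTout : ∀ t ∈ Icc (0:ℝ) 1, (t ≤ min u₀ s ∨ max u₀ s < t) →
        (t ≤ min u₀ s' ∨ max u₀ s' < t) →
        |T t| ≤ M₂ * N * (|s - u₀| * |s' - u₀| * (|s - u₀| + |s' - u₀|)) := by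
      intro t ht hcs hcs'
      have e : T t = ((s' - u₀) * (kk s t - kk u₀ t - (s - u₀) * Dk u₀ t)
          - (s - u₀) * (kk s' t - kk u₀ t - (s' - u₀) * Dk u₀ t)) * x t := by
        rw [hT]; ring
      rw [e, abs_mul]
      have h1 := htay u₀ hu₀ s hs t ht hcs
      have h2 := htay u₀ hu₀ s' hs' t ht hcs'
      calc _ ≤ (|s' - u₀| * (M₂ * |s - u₀| ^ 2) + |s - u₀| * (M₂ * |s' - u₀| ^ 2)) * N := by
            refine mul_le_mul ?_ (hN t ht) (abs_nonneg _) (by positivity)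
            refine le_trans (abs_sub _ _) ?_
            rw [abs_mul, abs_mul]
            exact add_le_add (mul_le_mul_of_nonneg_left h1 (abs_nonneg _))
              (mul_le_mul_of_nonneg_left h2 (abs_nonneg _))
        _ = M₂ * N * (|s - u₀| * |s' - u₀| * (|s - u₀| + |s' - u₀|)) := by ring
    have hTmid : ∀ t ∈ Icc (0:ℝ) 1, |T t| ≤ 2 * M₁ * N * (|s - u₀| * |s' - u₀|) := by
      intro t ht
      have e : T t = ((s' - u₀) * (kk s t - kk u₀ t)
          - (s - u₀) * (kk s' t - kk u₀ t)) * x t := by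
        rw [hT]; ring
      rw [e, abs_mul]
      calc _ ≤ (|s' - u₀| * (M₁ * |s - u₀|) + |s - u₀| * (M₁ * |s' - u₀|)) * N := by
            refine mul_le_mul ?_ (hN t ht) (abs_nonneg _) (by positivity)
            refine le_trans (abs_sub _ _) ?_
            rw [abs_mul, abs_mul]
            exact add_le_add
              (mul_le_mul_of_nonneg_left (hlip t ht s hs u₀ hu₀) (abs_nonneg _))
              (mul_le_mul_of_nonneg_left (hlip t ht s' hs' u₀ hu₀) (abs_nonneg _))
        _ = 2 * M₁ * N * (|s - u₀| * |s' - u₀|) := by ring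
    have hams : a ≤ min u₀ s :=
      le_min (min_le_left _ _) (le_trans (min_le_right _ _) (min_le_left _ _))
    have hams' : a ≤ min u₀ s' :=
      le_min (min_le_left _ _) (le_trans (min_le_right _ _) (min_le_right _ _))
    have hcms : max u₀ s ≤ c :=
      max_le (le_max_left _ _) (le_trans (le_max_left _ _) (le_max_right _ _))
    have hcms' : max u₀ s' ≤ c :=
      max_le (le_max_left _ _) (le_trans (le_max_right _ _) (le_max_right _ _))
    set P : ℝ := |s - u₀| * |s' - u₀| * (|s - u₀| + |s' - u₀|) with hP
    have hPnn : 0 ≤ P := by positivity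
    have hb1 : |∫ t in (0:ℝ)..a, T t| ≤ M₂ * N * P := by
      have hbd := norm_integral_le_of_norm_le_const (a := (0:ℝ)) (b := a) (f := T)
        (C := M₂ * N * P) (fun t ht => by
          rw [uIoc_of_le h0a] at ht
          have ht01 : t ∈ Icc (0:ℝ) 1 := ⟨ht.1.le, le_trans ht.2 ha01.2⟩
          rw [Real.norm_eq_abs]
          exact hTout t ht01 (Or.inl (le_trans ht.2 hams)) (Or.inl (le_trans ht.2 hams')))
      rw [Real.norm_eq_abs] at hbd
      refine le_trans hbd ?_
      rw [abs_of_nonneg (by linarith : (0:ℝ) ≤ a - 0)]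
      nlinarith [ha01.2, mul_nonneg (mul_nonneg hM₂0 hN0) hPnn, h0a]
    have hb3 : |∫ t in c..(1:ℝ), T t| ≤ M₂ * N * P := by
      have hbd := norm_integral_le_of_norm_le_const (a := c) (b := (1:ℝ)) (f := T)
        (C := M₂ * N * P) (fun t ht => by
          rw [uIoc_of_le hc1] at ht
          have ht01 : t ∈ Icc (0:ℝ) 1 := ⟨le_trans hc01.1 ht.1.le, ht.2⟩
          rw [Real.norm_eq_abs]
          exact hTout t ht01 (Or.inr (lt_of_le_of_lt hcms ht.1))
            (Or.inr (lt_of_le_of_lt hcms' ht.1)))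
      rw [Real.norm_eq_abs] at hbd
      refine le_trans hbd ?_
      rw [abs_of_nonneg (by linarith : (0:ℝ) ≤ 1 - c)]
      nlinarith [hc01.1, mul_nonneg (mul_nonneg hM₂0 hN0) hPnn, hc1]
    have hb2 : |∫ t in a..c, T t|
        ≤ 2 * M₁ * N * (|s - u₀| * |s' - u₀|) * (2 * (|s - u₀| + |s' - u₀|)) := by
      have hbd := norm_integral_le_of_norm_le_const (a := a) (b := c) (f := T)
        (C := 2 * M₁ * N * (|s - u₀| * |s' - u₀|)) (fun t ht => by
          rw [uIoc_of_le hac] at ht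
          have ht01 : t ∈ Icc (0:ℝ) 1 := ⟨le_trans h0a ht.1.le, le_trans ht.2 hc1⟩
          rw [Real.norm_eq_abs]
          exact hTmid t ht01)
      rw [Real.norm_eq_abs] at hbd
      refine le_trans hbd ?_
      have hcu : c - a ≤ 2 * (|s - u₀| + |s' - u₀|) := by
        have hcb : c ≤ u₀ + (|s - u₀| + |s' - u₀|) := by
          refine max_le ?_ (max_le ?_ ?_)
          · linarith [abs_nonneg (s - u₀), abs_nonneg (s' - u₀)]
          · linarith [le_abs_self (s - u₀), abs_nonneg (s' - u₀)]
          · linarith [le_abs_self (s' - u₀), abs_nonneg (s - u₀)]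
        have hab : u₀ - (|s - u₀| + |s' - u₀|) ≤ a := by
          refine le_min ?_ (le_min ?_ ?_)
          · linarith [abs_nonneg (s - u₀), abs_nonneg (s' - u₀)]
          · linarith [neg_abs_le (s - u₀), abs_nonneg (s' - u₀)]
          · linarith [neg_abs_le (s' - u₀), abs_nonneg (s - u₀)]
        linarith
      rw [abs_of_nonneg (by linarith : (0:ℝ) ≤ c - a)]
      have hnn : (0:ℝ) ≤ 2 * M₁ * N * (|s - u₀| * |s' - u₀|) := by positivity
      exact mul_le_mul_of_nonneg_left hcu hnn
    have hb2' : |∫ t in a..c, T t| ≤ 4 * M₁ * N * P := by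
      refine le_trans hb2 ?_
      rw [hP]; ring_nf; exact le_refl _
    rw [hcomb, hsplit]
    calc |(∫ t in (0:ℝ)..a, T t) + (∫ t in a..c, T t) + ∫ t in c..(1:ℝ), T t|
        ≤ |(∫ t in (0:ℝ)..a, T t) + (∫ t in a..c, T t)| + |∫ t in c..(1:ℝ), T t| :=
          abs_add_le _ _
      _ ≤ |∫ t in (0:ℝ)..a, T t| + |∫ t in a..c, T t| + |∫ t in c..(1:ℝ), T t| := by
          linarith [abs_add_le (∫ t in (0:ℝ)..a, T t) (∫ t in a..c, T t)]
      _ ≤ (4 * M₁ + 2 * M₂) * N * P := by linarith [hb1, hb2', hb3]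
  -- part (b): pass to the limit in s'
  by_cases hequal : s₀ = u₀
  · subst hequal
    simp
  have hneq : s₀ - u₀ ≠ 0 := sub_ne_zero.2 hequal
  have habs : 0 < |s₀ - u₀| := abs_pos.2 hneq
  haveI hNB : (nhdsWithin u₀ (Icc (0:ℝ) 1 \ {u₀})).NeBot := neBot_Icc_diff hu₀
  have hslope : Tendsto (slope f u₀) (nhdsWithin u₀ (Icc (0:ℝ) 1 \ {u₀})) (nhds (g u₀)) :=
    hasDerivWithinAt_iff_tendsto_slope.1 (hg u₀ hu₀)
  have h1 : Tendsto (fun s' => |slope f u₀ s₀ - slope f u₀ s'|)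
      (nhdsWithin u₀ (Icc (0:ℝ) 1 \ {u₀})) (nhds (|slope f u₀ s₀ - g u₀|)) :=
    (tendsto_const_nhds.sub hslope).abs
  have h2 : Tendsto (fun s' : ℝ => (4 * M₁ + 2 * M₂) * N * (|s₀ - u₀| + |s' - u₀|))
      (nhdsWithin u₀ (Icc (0:ℝ) 1 \ {u₀}))
      (nhds ((4 * M₁ + 2 * M₂) * N * (|s₀ - u₀| + |(u₀ : ℝ) - u₀|))) := by
    refine Tendsto.const_mul _ (Tendsto.const_add _ ?_)
    exact (((tendsto_id.mono_left nhdsWithin_le_nhds).sub_const u₀).abs)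
  have hev : ∀ᶠ s' in nhdsWithin u₀ (Icc (0:ℝ) 1 \ {u₀}),
      |slope f u₀ s₀ - slope f u₀ s'|
        ≤ (4 * M₁ + 2 * M₂) * N * (|s₀ - u₀| + |s' - u₀|) := by
    filter_upwards [self_mem_nhdsWithin] with s' hs'
    obtain ⟨hs'01, hs'ne⟩ := hs'
    have hne' : s' - u₀ ≠ 0 := sub_ne_zero.2 (by simpa using hs'ne)
    have habs' : 0 < |s' - u₀| := abs_pos.2 hne'
    have hkey := key s₀ hs₀ s' hs'01
    rw [slope_def_field, slope_def_field]
    have hid : (f s₀ - f u₀) / (s₀ - u₀) - (f s' - f u₀) / (s' - u₀)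
        = ((s' - u₀) * (f s₀ - f u₀) - (s₀ - u₀) * (f s' - f u₀))
            / ((s₀ - u₀) * (s' - u₀)) := by
      field_simp
    rw [hid, abs_div, abs_mul]
    rw [div_le_iff₀ (by positivity)]
    calc |(s' - u₀) * (f s₀ - f u₀) - (s₀ - u₀) * (f s' - f u₀)|
        ≤ (4 * M₁ + 2 * M₂) * N * (|s₀ - u₀| * |s' - u₀| * (|s₀ - u₀| + |s' - u₀|)) := hkey
      _ = (4 * M₁ + 2 * M₂) * N * (|s₀ - u₀| + |s' - u₀|) * (|s₀ - u₀| * |s' - u₀|) := by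
          ring
  have hlim : |slope f u₀ s₀ - g u₀| ≤ (4 * M₁ + 2 * M₂) * N * (|s₀ - u₀| + |(u₀:ℝ) - u₀|) :=
    le_of_tendsto_of_tendsto h1 h2 hev
  rw [sub_self, abs_zero, add_zero] at hlim
  have hfin : f s₀ - f u₀ - (s₀ - u₀) * g u₀ = (s₀ - u₀) * (slope f u₀ s₀ - g u₀) := by
    rw [slope_def_field]
    field_simp
  rw [hfin, abs_mul]
  calc |s₀ - u₀| * |slope f u₀ s₀ - g u₀|
      ≤ |s₀ - u₀| * ((4 * M₁ + 2 * M₂) * N * |s₀ - u₀|) :=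
        mul_le_mul_of_nonneg_left hlim (abs_nonneg _)
    _ = (4 * M₁ + 2 * M₂) * N * |s₀ - u₀| ^ 2 := by ring

open Set in
lemma deriv_lipschitz (f g : ℝ → ℝ) (K : ℝ)
    (hq : ∀ u₀ ∈ Icc (0:ℝ) 1, ∀ s ∈ Icc (0:ℝ) 1,
      |f s - f u₀ - (s - u₀) * g u₀| ≤ K * |s - u₀| ^ 2) :
    ∀ u ∈ Icc (0:ℝ) 1, ∀ v ∈ Icc (0:ℝ) 1, |g u - g v| ≤ 2 * K * |u - v| := by
  intro u hu v hv
  by_cases h : u = v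
  · subst h
    simp
  have habs : 0 < |u - v| := abs_pos.2 (sub_ne_zero.2 h)
  have h1 := hq u hu v hv
  have h2 := hq v hv u hu
  have hsum : (u - v) * (g u - g v)
      = (f u - f v - (u - v) * g v) + (f v - f u - (v - u) * g u) := by ring
  have h3 : |(u - v) * (g u - g v)| ≤ 2 * K * |u - v| ^ 2 := by
    rw [hsum]
    refine le_trans (abs_add_le _ _) ?_
    have hvu : |v - u| = |u - v| := abs_sub_comm v u
    rw [hvu] at h1
    linarith
  rw [abs_mul] at h3
  rw [show 2 * K * |u - v| ^ 2 = |u - v| * (2 * K * |u - v|) from by ring] at h3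
  exact le_of_mul_le_mul_left h3 habs

lemma snoc_inj {m : ℕ} {b : Fin m → ℝ} {z : ℝ} (hb : Function.Injective b)
    (hz : ∀ i, z ≠ b i) : Function.Injective (Fin.snoc b z : Fin (m + 1) → ℝ) := by
  intro i j hij
  rcases Fin.eq_castSucc_or_eq_last i with ⟨i', rfl⟩ | rfl <;>
    rcases Fin.eq_castSucc_or_eq_last j with ⟨j', rfl⟩ | rfl
  · rw [Fin.snoc_castSucc, Fin.snoc_castSucc] at hij
    rw [hb hij]
  · rw [Fin.snoc_castSucc, Fin.snoc_last] at hij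
    exact absurd hij.symm (hz i')
  · rw [Fin.snoc_castSucc, Fin.snoc_last] at hij
    exact absurd hij (hz j')
  · rfl


/-- there is a constant `C` depending only on `r`, the relative nodes
`ζ₀ < ⋯ < ζ_{2r}`, `M₁` and `M₂` such that for every `n ≥ 1`, every `j ∈ {1,…,n}`, every
`x ∈ C[0,1]` and every `s ∈ [t_{j−1}, t_j]` distinct from the collocation points
`τ_j^k = t_{j−1} + ζ_k h`, one has `|[τ_j^0, …, τ_j^{2r}, s, s]Kx| ≤ C ‖x‖∞ h^{−2r}`. -/
theorem stmt5 (r : ℕ) (ζ : Fin (2 * r + 1) → ℝ) (M₁ M₂ : ℝ)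
    (hζmono : StrictMono ζ) (hζ0 : 0 ≤ ζ 0) (hζ1 : ζ (Fin.last (2 * r)) ≤ 1) :
    ∃ C : ℝ, ∀ κ₁ κ₂ D1κ₁ D1κ₂ D2κ₁ D2κ₂ : ℝ → ℝ → ℝ,
    -- κ₁, κ₂ are twice continuously differentiable on Ω₁, Ω₂ respectively
    ContDiffOn ℝ 2 (Function.uncurry κ₁) {p : ℝ × ℝ | 0 ≤ p.2 ∧ p.2 ≤ p.1 ∧ p.1 ≤ 1} →
    ContDiffOn ℝ 2 (Function.uncurry κ₂) {p : ℝ × ℝ | 0 ≤ p.1 ∧ p.1 ≤ p.2 ∧ p.2 ≤ 1} →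
    -- they agree on the diagonal
    (∀ s ∈ Icc (0:ℝ) 1, κ₁ s s = κ₂ s s) →
    -- D1κᵢ is the partial derivative ∂κᵢ/∂s on Ωᵢ and D2κᵢ is ∂²κᵢ/∂s² on Ωᵢ
    (∀ t ∈ Icc (0:ℝ) 1, ∀ s ∈ Icc t 1,
      HasDerivWithinAt (fun u => κ₁ u t) (D1κ₁ s t) (Icc t 1) s) →
    (∀ t ∈ Icc (0:ℝ) 1, ∀ s ∈ Icc (0:ℝ) t,
      HasDerivWithinAt (fun u => κ₂ u t) (D1κ₂ s t) (Icc (0:ℝ) t) s) →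
    (∀ t ∈ Icc (0:ℝ) 1, ∀ s ∈ Icc t 1,
      HasDerivWithinAt (fun u => D1κ₁ u t) (D2κ₁ s t) (Icc t 1) s) →
    (∀ t ∈ Icc (0:ℝ) 1, ∀ s ∈ Icc (0:ℝ) t,
      HasDerivWithinAt (fun u => D1κ₂ u t) (D2κ₂ s t) (Icc (0:ℝ) t) s) →
    -- |∂κᵢ/∂s| ≤ M₁ and |∂²κᵢ/∂s²| ≤ M₂ on Ωᵢ
    (∀ t ∈ Icc (0:ℝ) 1, ∀ s ∈ Icc t 1, |D1κ₁ s t| ≤ M₁) →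
    (∀ t ∈ Icc (0:ℝ) 1, ∀ s ∈ Icc (0:ℝ) t, |D1κ₂ s t| ≤ M₁) →
    (∀ t ∈ Icc (0:ℝ) 1, ∀ s ∈ Icc t 1, |D2κ₁ s t| ≤ M₂) →
    (∀ t ∈ Icc (0:ℝ) 1, ∀ s ∈ Icc (0:ℝ) t, |D2κ₂ s t| ≤ M₂) →
    ∀ n : ℕ, 1 ≤ n → ∀ j : ℕ, 1 ≤ j → j ≤ n →
    ∀ x : ℝ → ℝ, ContinuousOn x (Icc (0:ℝ) 1) →
    ∀ s ∈ Icc (((j:ℝ) - 1) / n) ((j:ℝ) / n),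
      (∀ k : Fin (2 * r + 1), s ≠ ((j:ℝ) - 1) / n + ζ k / n) →
      -- Kx' is the derivative of Kx on [0,1], so that [s,s]Kx = Kx'(s)
      ∀ Kx' : ℝ → ℝ,
        (∀ u ∈ Icc (0:ℝ) 1, HasDerivWithinAt (Kop κ₁ κ₂ x) (Kx' u) (Icc (0:ℝ) 1) u) →
        |ddConf (2 * r + 1)
            (fun k : Fin (2 * r + 1) => ((j:ℝ) - 1) / n + ζ k / n) s
            (Kop κ₁ κ₂ x) (Kx' s)|
          ≤ C * supNorm x / ((1 / (n:ℝ)) ^ (2 * r)) := by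

  classical
  obtain ⟨δ, hδpos, hδgap⟩ : ∃ δ : ℝ, 0 < δ ∧
      ∀ a b : Fin (2 * r + 1), a < b → δ ≤ ζ b - ζ a := by
    rcases Nat.eq_zero_or_pos r with hr | hr
    · subst hr
      refine ⟨1, one_pos, fun a b hab => absurd hab ?_⟩
      rw [Fin.lt_def]
      have ha := a.isLt
      have hb := b.isLt
      omega
    · have hne : (Finset.univ : Finset (Fin (2 * r))).Nonempty :=
        ⟨⟨0, by omega⟩, Finset.mem_univ _⟩
      refine ⟨Finset.univ.inf' hne (fun k : Fin (2 * r) => ζ k.succ - ζ k.castSucc), ?_, ?_⟩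
      · rw [Finset.lt_inf'_iff]
        intro k _
        have := hζmono (Fin.castSucc_lt_succ : k.castSucc < k.succ)
        linarith
      · intro a b hab
        have hab' : (a : ℕ) < (b : ℕ) := hab
        have haval : (a : ℕ) < 2 * r := by omega
        have h1 : Finset.univ.inf' hne (fun k : Fin (2 * r) => ζ k.succ - ζ k.castSucc)
            ≤ ζ (⟨(a : ℕ), haval⟩ : Fin (2 * r)).succ - ζ (⟨(a : ℕ), haval⟩ : Fin (2 * r)).castSucc :=
          Finset.inf'_le _ (Finset.mem_univ _)
        have h2 : ζ (⟨(a : ℕ), haval⟩ : Fin (2 * r)).succ ≤ ζ b := by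
          refine hζmono.monotone ?_
          rw [Fin.le_def]
          simp
          omega
        have h3 : ζ (⟨(a : ℕ), haval⟩ : Fin (2 * r)).castSucc = ζ a := by
          congr 1
        linarith
  refine ⟨(8 * M₁ + 4 * M₂) * (2 / δ) ^ (2 * r), ?_⟩
  intro κ₁ κ₂ D1κ₁ D1κ₂ D2κ₁ D2κ₂ hκ₁ hκ₂ hdiag hD1κ₁ hD1κ₂ hD2κ₁ hD2κ₂ hb1₁ hb1₂ hb2₁ hb2₂
    n hn j hj1 hjn x hx s hsIcc hsne Kx' hK
  have hn0 : (0:ℝ) < n := by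
    have : (1:ℝ) ≤ n := by exact_mod_cast hn
    linarith
  have hj1' : (1:ℝ) ≤ j := by exact_mod_cast hj1
  have hjn' : (j:ℝ) ≤ n := by exact_mod_cast hjn
  set τ : Fin (2 * r + 1) → ℝ := fun k => ((j:ℝ) - 1) / n + ζ k / n with hτ
  have hζmem : ∀ k, 0 ≤ ζ k ∧ ζ k ≤ 1 := fun k =>
    ⟨le_trans hζ0 (hζmono.monotone (Fin.zero_le k)),
     le_trans (hζmono.monotone (Fin.le_last k)) hζ1⟩
  have hτmem : ∀ k, τ k ∈ Icc (0:ℝ) 1 := by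
    intro k
    show ((j:ℝ) - 1) / n + ζ k / n ∈ Icc (0:ℝ) 1
    constructor
    · exact add_nonneg (div_nonneg (by linarith) hn0.le)
        (div_nonneg (hζmem k).1 hn0.le)
    · have h2' : ζ k / n ≤ 1 / n := by
        have := (hζmem k).2
        gcongr
      have h2 : ((j:ℝ) - 1) / n + 1 / n = (j:ℝ) / n := by field_simp; ring
      have h3 : (j:ℝ) / n ≤ 1 := by
        rw [div_le_one hn0]
        exact hjn'
      linarith
  have hsub : Icc (((j:ℝ) - 1) / n) ((j:ℝ) / n) ⊆ Icc (0:ℝ) 1 := by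
    refine Icc_subset_Icc (div_nonneg (by linarith) hn0.le) ?_
    rw [div_le_one hn0]
    exact hjn'
  have hs01 : s ∈ Icc (0:ℝ) 1 := hsub hsIcc
  have hτgap : ∀ a b : Fin (2 * r + 1), a < b → δ / n ≤ τ b - τ a := by
    intro a b hab
    have h1 := hδgap a b hab
    have h2 : τ b - τ a = (ζ b - ζ a) / n := by simp only [hτ]; ring
    rw [h2]
    gcongr
  have hsneτ : ∀ k, s ≠ τ k := fun k => hsne k
  clear_value τ
  have hτsm : StrictMono τ := by
    intro a b hab
    have h1 := hτgap a b hab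
    have h2 : (0:ℝ) < δ / n := div_pos hδpos hn0
    show τ a < τ b
    linarith
  have hτinj : Function.Injective τ := hτsm.injective
  set N := supNorm x with hNdef
  have hbdd : BddAbove (Set.range fun t : Icc (0:ℝ) 1 => |x t.1|) := by
    have h1 : ContinuousOn (fun t => |x t|) (Icc (0:ℝ) 1) := hx.abs
    have h2 := (isCompact_Icc.image_of_continuousOn h1).bddAbove
    rwa [Set.image_eq_range] at h2
  have hN : ∀ t ∈ Icc (0:ℝ) 1, |x t| ≤ N := fun t ht => le_ciSup hbdd ⟨t, ht⟩
  have hN0 : 0 ≤ N := le_trans (abs_nonneg _) (hN 0 (by norm_num))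
  clear_value N
  set f : ℝ → ℝ := Kop κ₁ κ₂ x with hfdef
  have hf : ∀ u, f u = ∫ t in (0:ℝ)..1, (if t ≤ u then κ₁ u t else κ₂ u t) * x t :=
    fun u => rfl
  have hM₁0 : 0 ≤ M₁ :=
    le_trans (abs_nonneg _) (hb1₁ 0 (by norm_num) 0 (by norm_num))
  have hM₂0 : 0 ≤ M₂ :=
    le_trans (abs_nonneg _) (hb2₁ 0 (by norm_num) 0 (by norm_num))
  have hint : ∀ u ∈ Icc (0:ℝ) 1, MeasureTheory.IntegrableOn
      (fun t => (if t ≤ u then κ₁ u t else κ₂ u t) * x t) (Icc 0 1) MeasureTheory.volume :=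
    fun u hu => kop_int κ₁ κ₂ x (hκ₁.continuousOn) (hκ₂.continuousOn) hdiag hx hu
  have hlip := k_lip κ₁ κ₂ D1κ₁ D1κ₂ M₁ hdiag hD1κ₁ hD1κ₂ hb1₁ hb1₂
  have htay := k_taylor κ₁ κ₂ D1κ₁ D1κ₂ D2κ₁ D2κ₂ M₂ hD1κ₁ hD1κ₂ hD2κ₁ hD2κ₂ hb2₁ hb2₂
  have hquad := kop_quadratic f x N M₁ M₂
    (fun u t => if t ≤ u then κ₁ u t else κ₂ u t)
    (fun u t => if t ≤ u then D1κ₁ u t else D1κ₂ u t)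
    hM₁0 hM₂0 hf hN hint
    (fun t ht s₁ hs₁ s₂ hs₂ => hlip t ht s₁ hs₁ s₂ hs₂)
    (fun u₀ hu₀ s' hs' t ht hc => htay u₀ hu₀ s' hs' t ht hc)
    Kx' hK
  set L := (8 * M₁ + 4 * M₂) * N with hL
  have hL0 : 0 ≤ L := by rw [hL]; positivity
  clear_value L
  have hLip : ∀ u ∈ Icc (0:ℝ) 1, ∀ v ∈ Icc (0:ℝ) 1, |Kx' u - Kx' v| ≤ L * |u - v| := by
    intro u hu v hv
    have h1 := deriv_lipschitz f Kx' ((4 * M₁ + 2 * M₂) * N) hquad u hu v hv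
    have h2 : 2 * ((4 * M₁ + 2 * M₂) * N) = L := by rw [hL]; ring
    rwa [h2] at h1
  set e := δ / n with hedef
  have he : 0 < e := by rw [hedef]; exact div_pos hδpos hn0
  clear_value e
  have hd : HasDerivWithinAt f (Kx' s) (Icc (0:ℝ) 1) s := hK s hs01
  have htds := tendsto_divDiff_ddConf f hd (2 * r + 1) τ hsneτ
  haveI hNB := neBot_Icc_diff hs01
  have hρne : (Finset.univ : Finset (Fin (2 * r + 1))).Nonempty := ⟨0, Finset.mem_univ _⟩
  set ρ := Finset.univ.inf' hρne (fun k => |s - τ k|) with hρdef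
  have hρle : ∀ k, ρ ≤ |s - τ k| := fun k => Finset.inf'_le _ (Finset.mem_univ k)
  have hρ : 0 < ρ := by
    rw [hρdef, Finset.lt_inf'_iff]
    intro k _
    exact abs_pos.2 (sub_ne_zero.2 (hsneτ k))
  clear_value ρ
  have hball : ∀ᶠ t in nhdsWithin s (Icc (0:ℝ) 1 \ {s}), |t - s| < ρ := by
    have h1 : Metric.ball s ρ ∈ nhds s := Metric.ball_mem_nhds s hρ
    filter_upwards [nhdsWithin_le_nhds h1] with t ht
    rw [Metric.mem_ball, Real.dist_eq] at ht
    exact ht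
  have hev : ∀ᶠ t in nhdsWithin s (Icc (0:ℝ) 1 \ {s}),
      |divDiff (2 * r + 1 + 1) (Fin.snoc (Fin.snoc τ s) t) f| ≤ L * (2 / e) ^ (2 * r) := by
    filter_upwards [self_mem_nhdsWithin, hball] with t ht hts
    have ht01 : t ∈ Icc (0:ℝ) 1 := ht.1
    have htne : t ≠ s := by
      intro h
      exact ht.2 (by rw [h]; exact rfl)
    have htneτ : ∀ k, t ≠ τ k := by
      intro k hk
      have h1 : ρ ≤ |s - τ k| := hρle k
      rw [← hk, abs_sub_comm] at h1
      linarith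
    set q : Fin (2 * r + 3) → ℝ := Fin.snoc (Fin.snoc τ s) t with hqdef
    have hq1inj : Function.Injective (Fin.snoc τ s : Fin (2 * r + 2) → ℝ) :=
      snoc_inj hτinj hsneτ
    have hq1ne : ∀ i : Fin (2 * r + 2), t ≠ (Fin.snoc τ s : Fin (2 * r + 2) → ℝ) i := by
      intro i
      rcases Fin.eq_castSucc_or_eq_last i with ⟨i', rfl⟩ | rfl
      · rw [Fin.snoc_castSucc]; exact htneτ i'
      · rw [Fin.snoc_last]; exact htne
    have hqinj : Function.Injective q := snoc_inj hq1inj hq1ne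
    have hqmem : ∀ i, q i ∈ Icc (0:ℝ) 1 := by
      intro i
      rcases Fin.eq_castSucc_or_eq_last i with ⟨i', rfl⟩ | rfl
      · have e1 : q i'.castSucc = (Fin.snoc τ s : Fin (2 * r + 2) → ℝ) i' :=
          Fin.snoc_castSucc _ _ _
        rw [e1]
        rcases Fin.eq_castSucc_or_eq_last i' with ⟨i'', rfl⟩ | rfl
        · rw [Fin.snoc_castSucc]; exact hτmem i''
        · rw [Fin.snoc_last]; exact hs01
      · have e1 : q (Fin.last (2 * r + 2)) = t := Fin.snoc_last _ _
        rw [e1]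
        exact ht01
    set σ := Tuple.sort q with hσdef
    have hmono : Monotone (q ∘ σ) := Tuple.monotone_sort q
    have hsm : StrictMono (q ∘ σ) :=
      hmono.strictMono_of_injective (hqinj.comp σ.injective)
    have hqτ : ∀ w : Fin (2 * r + 3), ∀ hw : ((σ w : Fin (2 * r + 3)) : ℕ) < 2 * r + 1,
        (q ∘ σ) w = τ ⟨((σ w : Fin (2 * r + 3)) : ℕ), hw⟩ := by
      intro w hw
      have h1 : σ w = ((⟨((σ w : Fin (2 * r + 3)) : ℕ), hw⟩ : Fin (2 * r + 1)).castSucc.castSucc) := by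
        rw [Fin.ext_iff]
        simp
      have h2 : q ((⟨((σ w : Fin (2 * r + 3)) : ℕ), hw⟩ : Fin (2 * r + 1)).castSucc.castSucc)
          = τ ⟨((σ w : Fin (2 * r + 3)) : ℕ), hw⟩ := by
        have e1 : q ((⟨((σ w : Fin (2 * r + 3)) : ℕ), hw⟩ : Fin (2 * r + 1)).castSucc.castSucc)
            = (Fin.snoc τ s : Fin (2 * r + 2) → ℝ)
                ((⟨((σ w : Fin (2 * r + 3)) : ℕ), hw⟩ : Fin (2 * r + 1)).castSucc) :=
          Fin.snoc_castSucc _ _ _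
        have e2 : (Fin.snoc τ s : Fin (2 * r + 2) → ℝ)
            ((⟨((σ w : Fin (2 * r + 3)) : ℕ), hw⟩ : Fin (2 * r + 1)).castSucc)
            = τ ⟨((σ w : Fin (2 * r + 3)) : ℕ), hw⟩ := Fin.snoc_castSucc _ _ _
        rw [e1, e2]
      show q (σ w) = _
      conv_lhs => rw [h1]
      exact h2
    clear_value q σ
    have hwin : ∀ a b : Fin (2 * r + 3), (a : ℕ) + 3 ≤ (b : ℕ) →
        e ≤ (q ∘ σ) b - (q ∘ σ) a := by
      intro a b hab
      have hblt : (b : ℕ) < 2 * r + 3 := b.isLt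
      set TS : Finset (Fin (2 * r + 3)) :=
        {⟨(a:ℕ), by omega⟩, ⟨(a:ℕ)+1, by omega⟩, ⟨(a:ℕ)+2, by omega⟩, ⟨(a:ℕ)+3, by omega⟩}
        with hTSdef
      have hTScard : TS.card = 4 := by
        rw [hTSdef]
        rw [Finset.card_insert_of_notMem (by simp [Fin.ext_iff]),
          Finset.card_insert_of_notMem (by simp [Fin.ext_iff]),
          Finset.card_insert_of_notMem (by simp [Fin.ext_iff]), Finset.card_singleton]
      have hHcard : (TS.filter (fun k => 2 * r + 1 ≤ ((σ k : Fin (2 * r + 3)) : ℕ))).card ≤ 2 := by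
        have hmap : ∀ k ∈ TS.filter (fun k => 2 * r + 1 ≤ ((σ k : Fin (2 * r + 3)) : ℕ)),
            (σ k : Fin (2 * r + 3)) ∈
              ({⟨2 * r + 1, by omega⟩, ⟨2 * r + 2, by omega⟩} : Finset (Fin (2 * r + 3))) := by
          intro k hk
          have hk2 := (Finset.mem_filter.1 hk).2
          have hk3 := (σ k : Fin (2 * r + 3)).isLt
          simp only [Finset.mem_insert, Finset.mem_singleton, Fin.ext_iff]
          omega
        have hinj' : Set.InjOn (fun k => (σ k : Fin (2 * r + 3)))
            (TS.filter (fun k => 2 * r + 1 ≤ ((σ k : Fin (2 * r + 3)) : ℕ))) :=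
          fun u _ v _ h => σ.injective h
        refine le_trans (Finset.card_le_card_of_injOn _ hmap hinj') ?_
        refine le_trans (Finset.card_insert_le _ _) ?_
        simp
      have hHc : 1 < (TS.filter (fun k => ¬ (2 * r + 1 ≤ ((σ k : Fin (2 * r + 3)) : ℕ)))).card := by
        have := Finset.card_filter_add_card_filter_not (s := TS)
          (p := fun k => 2 * r + 1 ≤ ((σ k : Fin (2 * r + 3)) : ℕ))
        omega
      obtain ⟨u, hu, v, hv, huv⟩ := Finset.one_lt_card.1 hHc
      have huTS := (Finset.mem_filter.1 hu).1
      have hvTS := (Finset.mem_filter.1 hv).1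
      have huσ : ((σ u : Fin (2 * r + 3)) : ℕ) < 2 * r + 1 := by
        have := (Finset.mem_filter.1 hu).2
        omega
      have hvσ : ((σ v : Fin (2 * r + 3)) : ℕ) < 2 * r + 1 := by
        have := (Finset.mem_filter.1 hv).2
        omega
      have hrange : ∀ w ∈ TS, a ≤ w ∧ w ≤ b := by
        intro w hw
        rw [hTSdef] at hw
        simp only [Finset.mem_insert, Finset.mem_singleton] at hw
        rcases hw with rfl | rfl | rfl | rfl <;>
          constructor <;> rw [Fin.le_def] <;> simp <;> omega
      have hqu := hqτ u huσ
      have hqv := hqτ v hvσ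
      have hkne : (⟨((σ u : Fin (2 * r + 3)) : ℕ), huσ⟩ : Fin (2 * r + 1))
          ≠ ⟨((σ v : Fin (2 * r + 3)) : ℕ), hvσ⟩ := by
        intro h
        rw [Fin.ext_iff] at h
        simp at h
        exact huv (σ.injective (Fin.ext h))
      have hau := (hrange u huTS).1
      have hub := (hrange u huTS).2
      have hav := (hrange v hvTS).1
      have hvb := (hrange v hvTS).2
      have hmau : (q ∘ σ) a ≤ (q ∘ σ) u := hmono hau
      have hmub : (q ∘ σ) u ≤ (q ∘ σ) b := hmono hub
      have hmav : (q ∘ σ) a ≤ (q ∘ σ) v := hmono hav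
      have hmvb : (q ∘ σ) v ≤ (q ∘ σ) b := hmono hvb
      rw [hedef]
      rcases lt_or_gt_of_ne hkne with hlt | hlt
      · have := hτgap _ _ hlt
        rw [← hqu, ← hqv] at this
        linarith
      · have := hτgap _ _ hlt
        rw [← hqu, ← hqv] at this
        linarith
    have hbound := divDiff_sorted_bound f Kx' hK L e he hL0 hLip (2 * r) (q ∘ σ) hsm
      (fun i => hqmem _) hwin
    have hperm := divDiff_comp_perm (2 * r + 2) q f hqinj σ
    rw [hperm] at hbound
    exact hbound
  have hfinal := le_of_tendsto htds.abs hev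
  have hδne : δ ≠ 0 := ne_of_gt hδpos
  have hnne : (n:ℝ) ≠ 0 := ne_of_gt hn0
  have harith : (8 * M₁ + 4 * M₂) * (2 / δ) ^ (2 * r) * N / ((1 / (n:ℝ)) ^ (2 * r))
      = L * (2 / e) ^ (2 * r) := by
    have h1 : 2 / e = 2 / δ * n := by
      rw [hedef]
      field_simp
    rw [h1, mul_pow, hL]
    rw [one_div, inv_pow, div_eq_mul_inv, inv_inv]
    ring
  rw [← harith] at hfinal
  exact hfinal
end
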